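/- arXiv:1610.04165 — 7 statements merged into one kernel-verified Lean document; each statement's English description precedes it below -/
import Mathlib

section
/- Let A and B be positive invertible bounded linear operators on a complex Hilbert space H such that A − B is invertible, and let s ∈ (0,1). Then s·A⁻¹ + (1−s)·B⁻¹ − (s·A + (1−s)·B)⁻¹ is positive and invertible; that is, s·A⁻¹ + (1−s)·B⁻¹ > (s·A + (1−s)·B)⁻¹ in the strict Loewner order. (In other words, the function x ↦ 1/x is strictly operator convex on (0,∞).) -/
section Aux

variable {H : Type*} [NormedAddCommGroup H] [InnerProductSpace ℂ H] [CompleteSpace H]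

/-- Nonnegative real scalar multiple of a positive operator is positive. -/
lemma aux_smul_nonneg {T : H →L[ℂ] H} (hT : 0 ≤ T) {c : ℝ} (hc : 0 ≤ c) :
    0 ≤ c • T := by
  have h := star_left_conjugate_nonneg hT (Real.sqrt c • (1 : H →L[ℂ] H))
  have hst : star (Real.sqrt c • (1 : H →L[ℂ] H)) = Real.sqrt c • (1 : H →L[ℂ] H) := by
    rw [star_smul, star_one, star_trivial]
  rw [hst] at h
  have key : (Real.sqrt c • (1 : H →L[ℂ] H)) * T * (Real.sqrt c • (1 : H →L[ℂ] H)) = c • T := by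
    rw [smul_mul_assoc, one_mul, mul_smul_comm, mul_one, smul_smul,
      Real.mul_self_sqrt hc]
  rwa [key] at h

/-- The inverse of a positive invertible operator is positive. -/
lemma aux_inverse_nonneg {T : H →L[ℂ] H} (hT : 0 ≤ T) (hTu : IsUnit T) :
    0 ≤ Ring.inverse T := by
  have hsa : star T = T := IsSelfAdjoint.of_nonneg hT
  have hstar : star (Ring.inverse T) = Ring.inverse T := by
    rw [← Ring.inverse_star, hsa]
  have h := star_left_conjugate_nonneg hT (Ring.inverse T)
  rwa [hstar, Ring.inverse_mul_cancel _ hTu, one_mul] at h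

end Aux

/-- strict operator convexity of `x ↦ 1/x` on `(0, ∞)`:
if `A, B` are positive invertible operators on a complex Hilbert space with `A - B`
invertible and `s ∈ (0,1)`, then `s•A⁻¹ + (1-s)•B⁻¹ - (s•A + (1-s)•B)⁻¹` is positive
and invertible. -/
theorem stmt0 {H : Type*} [NormedAddCommGroup H] [InnerProductSpace ℂ H] [CompleteSpace H]
    (A B : H →L[ℂ] H) (hA : 0 ≤ A) (hB : 0 ≤ B) (hAu : IsUnit A) (hBu : IsUnit B)
    (hAB : IsUnit (A - B)) (s : ℝ) (hs : s ∈ Set.Ioo (0 : ℝ) 1) :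
    0 ≤ s • Ring.inverse A + (1 - s) • Ring.inverse B
        - Ring.inverse (s • A + (1 - s) • B) ∧
    IsUnit (s • Ring.inverse A + (1 - s) • Ring.inverse B
        - Ring.inverse (s • A + (1 - s) • B)) := by
  obtain ⟨hs0, hs1⟩ := hs
  have hs1' : (0 : ℝ) < 1 - s := by linarith
  set X := Ring.inverse A with hXdef
  set Y := Ring.inverse B with hYdef
  have hXA : X * A = 1 := Ring.inverse_mul_cancel _ hAu
  have hAX : A * X = 1 := Ring.mul_inverse_cancel _ hAu
  have hYB : Y * B = 1 := Ring.inverse_mul_cancel _ hBu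
  have hBY : B * Y = 1 := Ring.mul_inverse_cancel _ hBu
  have hXA' : ∀ t : H →L[ℂ] H, X * (A * t) = t := fun t => by
    rw [← mul_assoc, hXA, one_mul]
  have hAX' : ∀ t : H →L[ℂ] H, A * (X * t) = t := fun t => by
    rw [← mul_assoc, hAX, one_mul]
  have hYB' : ∀ t : H →L[ℂ] H, Y * (B * t) = t := fun t => by
    rw [← mul_assoc, hYB, one_mul]
  have hBY' : ∀ t : H →L[ℂ] H, B * (Y * t) = t := fun t => by
    rw [← mul_assoc, hBY, one_mul]
  have hX0 : 0 ≤ X := aux_inverse_nonneg hA hAu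
  have hY0 : 0 ≤ Y := aux_inverse_nonneg hB hBu
  have hXu : IsUnit X := isUnit_ringInverse.mpr hAu
  have hYu : IsUnit Y := isUnit_ringInverse.mpr hBu
  have hXs : star X = X := by
    rw [hXdef, ← Ring.inverse_star, IsSelfAdjoint.of_nonneg hA]
  have hYs : star Y = Y := by
    rw [hYdef, ← Ring.inverse_star, IsSelfAdjoint.of_nonneg hB]
  -- units of the form `c • T`
  have hsmul_unit : ∀ (c : ℝ) (T : H →L[ℂ] H), c ≠ 0 → IsUnit T → IsUnit (c • T) := by
    intro c T hc hT
    have h1 : IsUnit (c • (1 : H →L[ℂ] H)) := by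
      refine ⟨⟨c • 1, c⁻¹ • 1, ?_, ?_⟩, rfl⟩ <;>
        simp [smul_smul, mul_inv_cancel₀ hc, inv_mul_cancel₀ hc]
    have h2 : c • T = (c • (1 : H →L[ℂ] H)) * T := by rw [smul_mul_assoc, one_mul]
    rw [h2]
    exact h1.mul hT
  -- the operator M = s•B⁻¹ + (1-s)•A⁻¹
  set M := s • Y + (1 - s) • X with hMdef
  have hM0 : 0 ≤ M := add_nonneg (aux_smul_nonneg hY0 hs0.le)
    (aux_smul_nonneg hX0 hs1'.le)
  have hMu : IsUnit M := by
    refine CStarAlgebra.isUnit_of_le ((1 - s) • X) ?_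
      (IsStrictlyPositive.iff_of_unital.mpr
        ⟨aux_smul_nonneg hX0 hs1'.le, hsmul_unit (1 - s) X hs1'.ne' hXu⟩)
    have h0 : 0 ≤ M - (1 - s) • X := by
      have : M - (1 - s) • X = s • Y := by rw [hMdef]; abel
      rw [this]
      exact aux_smul_nonneg hY0 hs0.le
    exact sub_nonneg.mp h0
  set Mi := Ring.inverse M with hMidef
  have hMiM : Mi * M = 1 := Ring.inverse_mul_cancel _ hMu
  have hMMi : M * Mi = 1 := Ring.mul_inverse_cancel _ hMu
  have hMiM' : ∀ t : H →L[ℂ] H, Mi * (M * t) = t := fun t => by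
    rw [← mul_assoc, hMiM, one_mul]
  have hMMi' : ∀ t : H →L[ℂ] H, M * (Mi * t) = t := fun t => by
    rw [← mul_assoc, hMMi, one_mul]
  have hMi0 : 0 ≤ Mi := aux_inverse_nonneg hM0 hMu
  -- the operator C = s•A + (1-s)•B and its factorizations
  set C := s • A + (1 - s) • B with hCdef
  have hC1 : A * M * B = C := by
    rw [hMdef, hCdef]
    simp only [mul_add, add_mul, mul_smul_comm, smul_mul_assoc, mul_assoc, hYB, hAX',
      mul_one]
  have hC2 : B * M * A = C := by
    rw [hMdef, hCdef]
    simp only [mul_add, add_mul, mul_smul_comm, smul_mul_assoc, mul_assoc, hXA, hBY',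
      mul_one]
  have hCu : IsUnit C := by
    rw [← hC1]; exact (hAu.mul hMu).mul hBu
  set Ci := Ring.inverse C with hCidef
  have hCiC : Ci * C = 1 := Ring.inverse_mul_cancel _ hCu
  have hCi_unique : ∀ D : H →L[ℂ] H, C * D = 1 → Ci = D := by
    intro D h
    calc Ci = Ci * (C * D) := by rw [h, mul_one]
      _ = Ci * C * D := by rw [mul_assoc]
      _ = D := by rw [hCiC, one_mul]
  have hCi1 : Ci = Y * (Mi * X) := by
    refine hCi_unique _ ?_
    rw [← hC1]
    calc A * M * B * (Y * (Mi * X)) = A * (M * (B * (Y * (Mi * X)))) := by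
          simp only [mul_assoc]
      _ = 1 := by rw [hBY', hMMi', hAX]
  have hCi2 : Ci = X * (Mi * Y) := by
    refine hCi_unique _ ?_
    rw [← hC2]
    calc B * M * A * (X * (Mi * Y)) = B * (M * (A * (X * (Mi * Y)))) := by
          simp only [mul_assoc]
      _ = 1 := by rw [hAX', hMMi', hBY]
  have hpp : Y * (Mi * X) = X * (Mi * Y) := by rw [← hCi1, hCi2]
  -- the two decomposition identities
  have hXeq : X = s • (X * (Mi * Y)) + (1 - s) • (X * (Mi * X)) := by
    calc X = X * (Mi * M) := by rw [hMiM, mul_one]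
      _ = s • (X * (Mi * Y)) + (1 - s) • (X * (Mi * X)) := by
          rw [hMdef]
          simp only [mul_add, add_mul, mul_smul_comm, smul_mul_assoc, mul_assoc]
  have hYeq : Y = s • (Y * (Mi * Y)) + (1 - s) • (X * (Mi * Y)) := by
    calc Y = Y * (Mi * M) := by rw [hMiM, mul_one]
      _ = s • (Y * (Mi * Y)) + (1 - s) • (Y * (Mi * X)) := by
          rw [hMdef]
          simp only [mul_add, add_mul, mul_smul_comm, smul_mul_assoc, mul_assoc]
      _ = s • (Y * (Mi * Y)) + (1 - s) • (X * (Mi * Y)) := by rw [hpp]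
  -- pure ring expansion of the quadratic form
  have hE : (X - Y) * Mi * (X - Y)
      = X * (Mi * X) - X * (Mi * Y) - Y * (Mi * X) + Y * (Mi * Y) := by
    noncomm_ring
  have hE' : (X - Y) * Mi * (X - Y)
      = X * (Mi * X) - X * (Mi * Y) - X * (Mi * Y) + Y * (Mi * Y) := by
    rw [hE, hpp]
  -- the key identity
  have hmain : s • X + (1 - s) • Y - Ci
      = (s * (1 - s)) • ((X - Y) * Mi * (X - Y)) := by
    rw [hE', hCi2]
    generalize X * (Mi * Y) = p at hXeq hYeq ⊢
    generalize X * (Mi * X) = q at hXeq ⊢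
    generalize Y * (Mi * Y) = r at hYeq ⊢
    rw [hXeq, hYeq]
    module
  -- positivity of the quadratic form
  have hpos : 0 ≤ (X - Y) * Mi * (X - Y) := by
    have h := star_left_conjugate_nonneg hMi0 (X - Y)
    rwa [star_sub, hXs, hYs] at h
  -- invertibility of X - Y
  have hDu : IsUnit (X - Y) := by
    have hfac : X * (B - A) * Y = X - Y := by
      simp only [mul_sub, sub_mul, mul_assoc, hBY, mul_one, hXA']
    rw [← hfac]
    have hBAu : IsUnit (B - A) := by
      have : B - A = -(A - B) := by abel
      rw [this]
      exact hAB.neg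
    exact (hXu.mul hBAu).mul hYu
  -- assemble
  have hss : s * (1 - s) ≠ 0 := by positivity
  constructor
  · rw [hmain]
    exact aux_smul_nonneg hpos (by positivity)
  · rw [hmain]
    exact hsmul_unit _ _ hss ((hDu.mul (isUnit_ringInverse.mpr hMu)).mul hDu)
end

section
/- Fix λ ∈ ℝ with |λ| ≤ 1 and define f_λ(x) = x²/(1 − λx) for x ∈ (−1,1). If A and B are selfadjoint bounded linear operators on a complex Hilbert space with spectra contained in (−1,1) such that A − B is invertible, then for every s ∈ (0,1) the operator s·f_λ(A) + (1−s)·f_λ(B) − f_λ(s·A + (1−s)·B) is positive and invertible; that is, f_λ is strictly operator convex on (−1,1). -/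
section Aux
variable {H : Type*} [NormedAddCommGroup H] [InnerProductSpace ℂ H] [CompleteSpace H]

lemma stmt1_spec_pos (lam : ℝ) (hlam : |lam| ≤ 1) {T : H →L[ℂ] H}
    (hsT : spectrum ℝ T ⊆ Set.Ioo (-1 : ℝ) 1) :
    ∀ x ∈ spectrum ℝ T, 0 < 1 - lam * x := by
  intro x hx
  obtain ⟨h1, h2⟩ := hsT hx
  have hax : |x| < 1 := abs_lt.mpr ⟨h1, h2⟩
  have h3 : |lam * x| < 1 := by
    calc |lam * x| = |lam| * |x| := abs_mul _ _
    _ ≤ 1 * |x| := by gcongr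
    _ = |x| := one_mul _
    _ < 1 := hax
  linarith [(abs_lt.mp h3).2]

lemma stmt1_key (lam : ℝ) (hlam : |lam| ≤ 1) {T : H →L[ℂ] H} (hT : IsSelfAdjoint T)
    (hsT : spectrum ℝ T ⊆ Set.Ioo (-1 : ℝ) 1) :
    cfc (fun x : ℝ => (1 - lam * x)⁻¹) T * (1 - lam • T) = 1 ∧
    (1 - lam • T) * cfc (fun x : ℝ => (1 - lam * x)⁻¹) T = 1 ∧
    0 ≤ cfc (fun x : ℝ => (1 - lam * x)⁻¹) T ∧
    IsSelfAdjoint (cfc (fun x : ℝ => (1 - lam * x)⁻¹) T) ∧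
    (lam ≠ 0 → cfc (fun x : ℝ => x ^ 2 / (1 - lam * x)) T
      = (lam⁻¹ * lam⁻¹) • (1 - lam • T)
        + (lam⁻¹ * lam⁻¹) • cfc (fun x : ℝ => (1 - lam * x)⁻¹) T
        - (2 * (lam⁻¹ * lam⁻¹)) • 1) := by
  have hpos := stmt1_spec_pos lam hlam hsT
  have hcont : ContinuousOn (fun x : ℝ => (1 - lam * x)⁻¹) (spectrum ℝ T) :=
    ContinuousOn.inv₀ (by fun_prop) (fun x hx => (hpos x hx).ne')
  have hC : cfc (fun x : ℝ => 1 - lam * x) T = 1 - lam • T := by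
    rw [cfc_sub (a := T) _ _ (by fun_prop) (by fun_prop)]
    rw [cfc_const_mul_id lam T, cfc_const (1:ℝ) T, map_one]
  have hmul1 : cfc (fun x : ℝ => (1 - lam * x)⁻¹) T * (1 - lam • T) = 1 := by
    rw [← hC, ← cfc_mul _ _ T hcont (by fun_prop)]
    rw [cfc_congr (g := fun _ => (1:ℝ)) (fun x hx => inv_mul_cancel₀ (hpos x hx).ne')]
    rw [cfc_const (1:ℝ) T, map_one]
  have hmul2 : (1 - lam • T) * cfc (fun x : ℝ => (1 - lam * x)⁻¹) T = 1 := by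
    rw [← hC, ← cfc_mul _ _ T (by fun_prop) hcont]
    rw [cfc_congr (g := fun _ => (1:ℝ)) (fun x hx => mul_inv_cancel₀ (hpos x hx).ne')]
    rw [cfc_const (1:ℝ) T, map_one]
  have hnn : 0 ≤ cfc (fun x : ℝ => (1 - lam * x)⁻¹) T :=
    cfc_nonneg (fun x hx => (inv_pos.mpr (hpos x hx)).le)
  refine ⟨hmul1, hmul2, hnn, IsSelfAdjoint.of_nonneg hnn, fun hlam0 => ?_⟩
  have key : ∀ x ∈ spectrum ℝ T, x ^ 2 / (1 - lam * x)
      = (lam⁻¹ * lam⁻¹) * (1 - lam * x) + (lam⁻¹ * lam⁻¹) * (1 - lam * x)⁻¹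
        - 2 * (lam⁻¹ * lam⁻¹) := by
    intro x hx
    have h := (hpos x hx).ne'
    field_simp
    linear_combination (-2 : ℝ) * (inv_mul_cancel₀ (by rwa [mul_comm x lam]) : (1 - x * lam)⁻¹ * (1 - x * lam) = 1)
  rw [cfc_congr key]
  rw [cfc_sub (a := T) _ _ (by exact (continuousOn_const.mul (by fun_prop)).add (continuousOn_const.mul hcont)) (by fun_prop)]
  rw [cfc_add (a := T) _ _ (by exact continuousOn_const.mul (by fun_prop)) (by exact continuousOn_const.mul hcont)]
  rw [cfc_const_mul _ _ T (by fun_prop), cfc_const_mul _ _ T hcont, hC,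
    cfc_const _ T, Algebra.algebraMap_eq_smul_one]

lemma stmt1_smul_nonneg {c : ℝ} (hc : 0 ≤ c) {Z : H →L[ℂ] H} (hZ : 0 ≤ Z) : 0 ≤ c • Z := by
  have hW := CFC.sqrt_mul_sqrt_self Z hZ
  set W := CFC.sqrt Z
  have hWsa : IsSelfAdjoint W := IsSelfAdjoint.of_nonneg (CFC.sqrt_nonneg Z)
  have h := star_mul_self_nonneg (Real.sqrt c • W)
  rwa [star_smul, star_trivial, smul_mul_assoc, mul_smul_comm, smul_smul,
    Real.mul_self_sqrt hc, hWsa.star_eq, hW] at h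

lemma stmt1_norm_lt {T : H →L[ℂ] H} (hT : IsSelfAdjoint T)
    (hsT : spectrum ℝ T ⊆ Set.Ioo (-1 : ℝ) 1) : ‖T‖ < 1 := by
  rw [← cfc_id ℝ T]
  refine norm_cfc_lt one_pos (fun x hx => ?_)
  have := hsT hx
  rw [Real.norm_eq_abs, id]
  exact abs_lt.mpr ⟨this.1, this.2⟩

end Aux

set_option maxHeartbeats 2000000 in
theorem stmt1' {H : Type*} [NormedAddCommGroup H] [InnerProductSpace ℂ H] [CompleteSpace H]
    (lam : ℝ) (hlam : |lam| ≤ 1) (A B : H →L[ℂ] H)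
    (hA : IsSelfAdjoint A) (hB : IsSelfAdjoint B)
    (hsA : spectrum ℝ A ⊆ Set.Ioo (-1 : ℝ) 1) (hsB : spectrum ℝ B ⊆ Set.Ioo (-1 : ℝ) 1)
    (hAB : IsUnit (A - B)) (s : ℝ) (hs : s ∈ Set.Ioo (0 : ℝ) 1) :
    0 ≤ s • cfc (fun x : ℝ => x ^ 2 / (1 - lam * x)) A
        + (1 - s) • cfc (fun x : ℝ => x ^ 2 / (1 - lam * x)) B
        - cfc (fun x : ℝ => x ^ 2 / (1 - lam * x)) (s • A + (1 - s) • B) ∧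
    IsUnit (s • cfc (fun x : ℝ => x ^ 2 / (1 - lam * x)) A
        + (1 - s) • cfc (fun x : ℝ => x ^ 2 / (1 - lam * x)) B
        - cfc (fun x : ℝ => x ^ 2 / (1 - lam * x)) (s • A + (1 - s) • B)) := by
  obtain ⟨hs0, hs1⟩ := hs
  rcases subsingleton_or_nontrivial H with hH | hH
  · have : Subsingleton (H →L[ℂ] H) :=
      ⟨fun _ _ => ContinuousLinearMap.ext fun x => Subsingleton.elim _ _⟩
    exact ⟨le_of_eq (Subsingleton.elim _ _), isUnit_of_subsingleton _⟩
  set M := s • A + (1 - s) • B with hMdef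
  have hM : IsSelfAdjoint M := (IsSelfAdjoint.smul (star_trivial s) hA).add (IsSelfAdjoint.smul (star_trivial (1-s)) hB)
  have hsM : spectrum ℝ M ⊆ Set.Ioo (-1 : ℝ) 1 := by
    have hnA := stmt1_norm_lt hA hsA
    have hnB := stmt1_norm_lt hB hsB
    have hnM : ‖M‖ < 1 := by
      calc ‖M‖ ≤ ‖s • A‖ + ‖(1 - s) • B‖ := norm_add_le _ _
      _ = s * ‖A‖ + (1 - s) * ‖B‖ := by
          rw [norm_smul, norm_smul, Real.norm_eq_abs, Real.norm_eq_abs,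
            abs_of_pos hs0, abs_of_pos (by linarith)]
      _ < 1 := by nlinarith [norm_nonneg A, norm_nonneg B]
    intro x hx
    have h1 := spectrum.norm_le_norm_of_mem hx
    have h2 : |x| < 1 := lt_of_le_of_lt (by simpa using h1) hnM
    exact abs_lt.mp h2
  by_cases hlam0 : lam = 0
  · subst hlam0
    have hf : (fun x : ℝ => x ^ 2 / (1 - 0 * x)) = (· ^ 2 : ℝ → ℝ) := by
      funext x; simp
    rw [hf, cfc_pow_id A 2 hA, cfc_pow_id B 2 hB, cfc_pow_id M 2 hM]
    have hkey : s • A ^ 2 + (1 - s) • B ^ 2 - M ^ 2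
        = (s * (1 - s)) • ((A - B) * (A - B)) := by
      rw [hMdef]
      simp only [pow_two, add_mul, mul_add, sub_mul, mul_sub, smul_mul_assoc, mul_smul_comm]
      module
    rw [hkey]
    constructor
    · refine stmt1_smul_nonneg (by nlinarith) ?_
      simpa [(hA.sub hB).star_eq] using star_mul_self_nonneg (A - B)
    · rw [Algebra.smul_def]
      exact ((isUnit_iff_ne_zero.mpr (by nlinarith)).map
        (algebraMap ℝ (H →L[ℂ] H))).mul (hAB.mul hAB)
  · obtain ⟨hCiC, hCCi, hCi_nn, hCi_sa, hfA'⟩ := stmt1_key lam hlam hA hsA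
    obtain ⟨hDiD, hDDi, hDi_nn, hDi_sa, hfB'⟩ := stmt1_key lam hlam hB hsB
    obtain ⟨hEiE, hEEi, hEi_nn, hEi_sa, hfM'⟩ := stmt1_key lam hlam hM hsM
    have hfA := hfA' hlam0
    have hfB := hfB' hlam0
    have hfM := hfM' hlam0
    clear hfA' hfB' hfM'
    obtain ⟨Ci, hCidef⟩ : ∃ X, X = cfc (fun x : ℝ => (1 - lam * x)⁻¹) A := ⟨_, rfl⟩
    obtain ⟨Di, hDidef⟩ : ∃ X, X = cfc (fun x : ℝ => (1 - lam * x)⁻¹) B := ⟨_, rfl⟩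
    obtain ⟨Ei, hEidef⟩ : ∃ X, X = cfc (fun x : ℝ => (1 - lam * x)⁻¹) M := ⟨_, rfl⟩
    obtain ⟨C, hCdef⟩ : ∃ X, X = 1 - lam • A := ⟨_, rfl⟩
    obtain ⟨D, hDdef⟩ : ∃ X, X = 1 - lam • B := ⟨_, rfl⟩
    obtain ⟨E, hEdef⟩ : ∃ X, X = 1 - lam • M := ⟨_, rfl⟩
    rw [← hCidef] at hCiC hCCi hfA hCi_nn hCi_sa
    rw [← hCdef] at hCiC hCCi hfA
    rw [← hDidef] at hDiD hDDi hfB hDi_nn hDi_sa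
    rw [← hDdef] at hDiD hDDi hfB
    rw [← hEidef] at hEiE hEEi hfM hEi_nn hEi_sa
    rw [← hEdef] at hEiE hEEi hfM
    have cC : ∀ X : H →L[ℂ] H, C * (Ci * X) = X := fun X => by
      rw [← mul_assoc, hCCi, one_mul]
    have cC' : ∀ X : H →L[ℂ] H, Ci * (C * X) = X := fun X => by
      rw [← mul_assoc, hCiC, one_mul]
    have cD : ∀ X : H →L[ℂ] H, D * (Di * X) = X := fun X => by
      rw [← mul_assoc, hDDi, one_mul]
    have cD' : ∀ X : H →L[ℂ] H, Di * (D * X) = X := fun X => by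
      rw [← mul_assoc, hDiD, one_mul]
    have cE : ∀ X : H →L[ℂ] H, E * (Ei * X) = X := fun X => by
      rw [← mul_assoc, hEEi, one_mul]
    have cE' : ∀ X : H →L[ℂ] H, Ei * (E * X) = X := fun X => by
      rw [← mul_assoc, hEiE, one_mul]
    have hE : E = s • C + (1 - s) • D := by
      rw [hEdef, hMdef, hCdef, hDdef]; module
    have hΔ : s • cfc (fun x : ℝ => x ^ 2 / (1 - lam * x)) A
        + (1 - s) • cfc (fun x : ℝ => x ^ 2 / (1 - lam * x)) B
        - cfc (fun x : ℝ => x ^ 2 / (1 - lam * x)) M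
        = (lam⁻¹ * lam⁻¹) • (s • Ci + (1 - s) • Di - Ei) := by
      rw [hfA, hfB, hfM, hE]
      module
    obtain ⟨R, hRdef⟩ : ∃ X, X = Ci - Di := ⟨_, rfl⟩
    have h1 : R * C = Di * (D - C) := by
      rw [hRdef, sub_mul, mul_sub, hCiC, hDiD]
    have h2 : D * R = (D - C) * Ci := by
      rw [hRdef, mul_sub, sub_mul, hDDi, hCCi]
    have h3 : D - E = s • (D - C) := by rw [hE]; module
    have h4 : E - C = (1 - s) • (D - C) := by rw [hE]; module
    have hexp : (D - E) * Ei * (E - C) = D - D * (Ei * C) - E + C := by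
      simp only [sub_mul, mul_sub, mul_assoc]
      simp only [hEiE, mul_one, cE]
      abel
    have hT1 : s • Ci + (1 - s) • Di - Ei = (s * (1 - s)) • (R * (C * (Ei * D)) * R) := by
      have step1 : R * (C * (Ei * D)) * R = (R * C) * Ei * (D * R) := by
        simp only [mul_assoc]
      have step3 : (s * (1 - s)) • ((Di * (D - C)) * Ei * ((D - C) * Ci))
          = Di * ((s • (D - C)) * Ei * ((1 - s) • (D - C))) * Ci := by
        simp only [smul_mul_assoc, mul_smul_comm, smul_smul, mul_assoc]
        rw [mul_comm (1 - s) s]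
      rw [step1, h1, h2, step3, ← h3, ← h4, hexp]
      rw [hE]
      simp only [mul_sub, sub_mul, mul_add, add_mul, smul_mul_assoc, mul_smul_comm, mul_assoc]
      simp only [hCCi, mul_one, cD']
      module
    obtain ⟨G, hGdef⟩ : ∃ X, X = s • Di + (1 - s) • Ci := ⟨_, rfl⟩
    have hGeq : Di * (E * Ci) = G := by
      rw [hE, hGdef]
      simp only [add_mul, mul_add, smul_mul_assoc, mul_smul_comm]
      simp only [hCCi, mul_one, cD']
    have huG : (C * (Ei * D)) * (Di * (E * Ci)) = 1 := by
      simp only [mul_assoc, cD, cE']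
      exact hCCi
    have hGu : (Di * (E * Ci)) * (C * (Ei * D)) = 1 := by
      simp only [mul_assoc, cC', cE]
      exact hDiD
    rw [hGeq] at huG hGu
    obtain ⟨u, hudef⟩ : ∃ X, X = C * (Ei * D) := ⟨_, rfl⟩
    rw [← hudef] at huG hGu
    have hG_sa : IsSelfAdjoint G := by
      rw [hGdef]
      exact (IsSelfAdjoint.smul (star_trivial s) hDi_sa).add
        (IsSelfAdjoint.smul (star_trivial (1 - s)) hCi_sa)
    have hG_nn : 0 ≤ G := by
      rw [hGdef]
      exact add_nonneg (stmt1_smul_nonneg hs0.le hDi_nn)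
        (stmt1_smul_nonneg (by linarith) hCi_nn)
    have hu_sa : star u = u := by
      have h5 : star u * G = 1 := by
        calc star u * G = star u * star G := by rw [hG_sa.star_eq]
        _ = star (G * u) := (star_mul _ _).symm
        _ = 1 := by rw [hGu, star_one]
      calc star u = star u * (G * u) := by rw [hGu, mul_one]
      _ = (star u * G) * u := by rw [mul_assoc]
      _ = u := by rw [h5, one_mul]
    have hu_nn : 0 ≤ u := by
      have h := star_left_conjugate_nonneg hG_nn u
      rwa [hu_sa, mul_assoc, hGu, mul_one] at h
    have hu_unit : IsUnit u := ⟨⟨u, G, huG, hGu⟩, rfl⟩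
    have hPu : IsUnit (D - C) := by
      have hDC : D - C = lam • (A - B) := by rw [hCdef, hDdef]; module
      rw [hDC, Algebra.smul_def]
      exact ((isUnit_iff_ne_zero.mpr hlam0).map (algebraMap ℝ (H →L[ℂ] H))).mul hAB
    have hCi_unit : IsUnit Ci := ⟨⟨Ci, C, hCiC, hCCi⟩, rfl⟩
    have hDi_unit : IsUnit Di := ⟨⟨Di, D, hDiD, hDDi⟩, rfl⟩
    have hReq : Ci * ((D - C) * Di) = R := by
      simp only [mul_sub, sub_mul]
      simp only [hDDi, mul_one, cC']
      rw [hRdef]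
    have hR_unit : IsUnit R := by
      rw [← hReq]
      exact hCi_unit.mul (hPu.mul hDi_unit)
    have hc_nn : (0:ℝ) ≤ lam⁻¹ * lam⁻¹ * (s * (1 - s)) :=
      mul_nonneg (mul_self_nonneg _) (by nlinarith)
    have hc_ne : lam⁻¹ * lam⁻¹ * (s * (1 - s)) ≠ 0 :=
      mul_ne_zero (mul_ne_zero (inv_ne_zero hlam0) (inv_ne_zero hlam0)) (by nlinarith)
    rw [hΔ, hT1, ← hudef, smul_smul]
    constructor
    · refine stmt1_smul_nonneg hc_nn ?_
      have h := star_left_conjugate_nonneg hu_nn R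
      have hR_sa : star R = R := by rw [hRdef]; exact (hCi_sa.sub hDi_sa).star_eq
      rwa [hR_sa] at h
    · rw [Algebra.smul_def]
      exact ((isUnit_iff_ne_zero.mpr hc_ne).map (algebraMap ℝ (H →L[ℂ] H))).mul
        ((hR_unit.mul hu_unit).mul hR_unit)


/-- for `|λ| ≤ 1`, the function `f_λ(x) = x² / (1 - λx)` is strictly
operator convex on `(-1, 1)`. -/
theorem stmt1 {H : Type*} [NormedAddCommGroup H] [InnerProductSpace ℂ H] [CompleteSpace H]
    (lam : ℝ) (hlam : |lam| ≤ 1) (A B : H →L[ℂ] H)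
    (hA : IsSelfAdjoint A) (hB : IsSelfAdjoint B)
    (hsA : spectrum ℝ A ⊆ Set.Ioo (-1 : ℝ) 1) (hsB : spectrum ℝ B ⊆ Set.Ioo (-1 : ℝ) 1)
    (hAB : IsUnit (A - B)) (s : ℝ) (hs : s ∈ Set.Ioo (0 : ℝ) 1) :
    0 ≤ s • cfc (fun x : ℝ => x ^ 2 / (1 - lam * x)) A
        + (1 - s) • cfc (fun x : ℝ => x ^ 2 / (1 - lam * x)) B
        - cfc (fun x : ℝ => x ^ 2 / (1 - lam * x)) (s • A + (1 - s) • B) ∧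
    IsUnit (s • cfc (fun x : ℝ => x ^ 2 / (1 - lam * x)) A
        + (1 - s) • cfc (fun x : ℝ => x ^ 2 / (1 - lam * x)) B
        - cfc (fun x : ℝ => x ^ 2 / (1 - lam * x)) (s • A + (1 - s) • B)) := by
  exact stmt1' lam hlam A B hA hB hsA hsB hAB s hs
end

section
/- Let A and B be positive invertible bounded linear operators on a complex Hilbert space with A ≥ B and A − B invertible, and set m = ‖(A−B)⁻¹‖⁻¹. Then B⁻¹ − A⁻¹ ≥ (1/(‖A‖ − m) − 1/‖A‖)·I, where I is the identity operator. -/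
section Aux

variable {𝔸 : Type*} [CStarAlgebra 𝔸] [PartialOrder 𝔸] [StarOrderedRing 𝔸]

/-- In a nontrivial unital C⋆-algebra, a positive invertible element is bounded below by
`‖x⁻¹‖⁻¹ • 1`. -/
lemma aux_inv_norm_smul_one_le [Nontrivial 𝔸] {X : 𝔸} (hX : 0 ≤ X) (hXu : IsUnit X) :
    ‖Ring.inverse X‖⁻¹ • (1 : 𝔸) ≤ X := by
  lift X to 𝔸ˣ using hXu
  have hXinv_nonneg : (0 : 𝔸) ≤ ↑X⁻¹ := CFC.inv_nonneg_of_nonneg X hX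
  rw [Ring.inverse_unit]
  have hne : (↑X⁻¹ : 𝔸) ≠ 0 := X⁻¹.ne_zero
  have hnorm_pos : (0 : ℝ) < ‖(↑X⁻¹ : 𝔸)‖ := norm_pos_iff.mpr hne
  set N : ℝ := ‖(↑X⁻¹ : 𝔸)‖ with hN
  have hmul : (N • (1 : 𝔸)) * (N⁻¹ • (1 : 𝔸)) = 1 := by
    rw [smul_mul_smul_comm, one_mul, mul_inv_cancel₀ hnorm_pos.ne', one_smul]
  have hmul' : (N⁻¹ • (1 : 𝔸)) * (N • (1 : 𝔸)) = 1 := by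
    rw [smul_mul_smul_comm, one_mul, inv_mul_cancel₀ hnorm_pos.ne', one_smul]
  set c : 𝔸ˣ := ⟨N • (1 : 𝔸), N⁻¹ • (1 : 𝔸), hmul, hmul'⟩ with hc
  have hle : (↑X⁻¹ : 𝔸) ≤ (c : 𝔸) := by
    have := IsSelfAdjoint.le_algebraMap_norm_self (a := (↑X⁻¹ : 𝔸))
      (IsSelfAdjoint.of_nonneg hXinv_nonneg)
    simpa [hc, Algebra.algebraMap_eq_smul_one] using this
  have key := CStarAlgebra.inv_le_inv (a := X⁻¹) (b := c) hXinv_nonneg hle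
  simpa [hc] using key

end Aux

private lemma aux_scalar (m ε N x : ℝ) (hm : 0 < m) (hε : 0 < ε)
    (hx1 : m + ε ≤ x) (hxN : x ≤ N) :
    (1 / (N - m) - 1 / N) + x⁻¹ ≤ (x - m)⁻¹ := by
  have hx0 : 0 < x := by linarith
  have hxm : 0 < x - m := by linarith
  have hN0 : 0 < N := lt_of_lt_of_le hx0 hxN
  have hNm : 0 < N - m := by linarith
  have h1 : (x - m)⁻¹ - x⁻¹ = m * (x * (x - m))⁻¹ := by
    field_simp
    try left
    ring
  have h2 : 1 / (N - m) - 1 / N = m * (N * (N - m))⁻¹ := by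
    field_simp
    try left
    ring
  have h3 : x * (x - m) ≤ N * (N - m) := by nlinarith
  have h4 : m * (N * (N - m))⁻¹ ≤ m * (x * (x - m))⁻¹ := by
    have h5 : (N * (N - m))⁻¹ ≤ (x * (x - m))⁻¹ := by
      apply inv_anti₀ (by positivity) h3
    exact mul_le_mul_of_nonneg_left h5 hm.le
  linarith

set_option maxHeartbeats 1000000 in
set_option synthInstance.maxHeartbeats 200000 in
/-- if `A > B > 0` and `m = ‖(A-B)⁻¹‖⁻¹`, then
`B⁻¹ - A⁻¹ ≥ (1/(‖A‖ - m) - 1/‖A‖) • I`. -/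
theorem stmt4 {H : Type*} [NormedAddCommGroup H] [InnerProductSpace ℂ H] [CompleteSpace H]
    (A B : H →L[ℂ] H) (hA : 0 ≤ A) (hB : 0 ≤ B) (hAu : IsUnit A) (hBu : IsUnit B)
    (hBA : B ≤ A) (hAB : IsUnit (A - B)) (m : ℝ) (hm : m = ‖Ring.inverse (A - B)‖⁻¹) :
    (1 / (‖A‖ - m) - 1 / ‖A‖) • (1 : H →L[ℂ] H)
      ≤ Ring.inverse B - Ring.inverse A := by
  obtain hns | hns := subsingleton_or_nontrivial (H →L[ℂ] H)
  · exact le_of_eq (Subsingleton.elim _ _)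
  have hsA : IsSelfAdjoint A := .of_nonneg hA
  have hAB0 : (0 : H →L[ℂ] H) ≤ A - B := sub_nonneg.mpr hBA
  -- m > 0
  have hm_pos : 0 < m := by
    rw [hm]
    refine inv_pos.mpr (norm_pos_iff.mpr ?_)
    obtain ⟨U, hU⟩ := hAB
    rw [← hU, Ring.inverse_unit]
    exact U⁻¹.ne_zero
  -- ε := lower bound of B
  set ε : ℝ := ‖Ring.inverse B‖⁻¹ with hε_def
  have hε_pos : 0 < ε := by
    refine inv_pos.mpr (norm_pos_iff.mpr ?_)
    obtain ⟨U, hU⟩ := hBu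
    rw [← hU, Ring.inverse_unit]
    exact U⁻¹.ne_zero
  -- key1 : m • 1 ≤ A - B
  have key1 : m • (1 : H →L[ℂ] H) ≤ A - B := by
    rw [hm]; exact aux_inv_norm_smul_one_le hAB0 hAB
  have keyB : ε • (1 : H →L[ℂ] H) ≤ B := aux_inv_norm_smul_one_le hB hBu
  -- (m + ε) • 1 ≤ A
  have keyb : (m + ε) • (1 : H →L[ℂ] H) ≤ A := by
    have h := add_le_add key1 keyB
    rw [sub_add_cancel] at h
    rw [add_smul]
    exact h
  -- A ≤ ‖A‖ • 1
  have keyt : A ≤ ‖A‖ • (1 : H →L[ℂ] H) := by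
    simpa [Algebra.algebraMap_eq_smul_one] using hsA.le_algebraMap_norm_self
  -- spectrum bounds
  have hspec_lb : ∀ x ∈ spectrum ℝ A, m + ε ≤ x := by
    intro x hx
    have hnn : (0 : H →L[ℂ] H) ≤ A - algebraMap ℝ _ (m + ε) := by
      rw [Algebra.algebraMap_eq_smul_one]; exact sub_nonneg.mpr keyb
    have hmem : x - (m + ε) ∈ spectrum ℝ (A - algebraMap ℝ _ (m + ε)) := by
      rw [← spectrum.sub_singleton_eq]
      exact Set.sub_mem_sub hx rfl
    have := spectrum_nonneg_of_nonneg hnn hmem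
    linarith
  have hspec_ub : ∀ x ∈ spectrum ℝ A, x ≤ ‖A‖ := by
    intro x hx
    have hnn : (0 : H →L[ℂ] H) ≤ algebraMap ℝ _ ‖A‖ - A := by
      rw [Algebra.algebraMap_eq_smul_one]; exact sub_nonneg.mpr keyt
    have hmem : ‖A‖ - x ∈ spectrum ℝ (algebraMap ℝ _ ‖A‖ - A) := by
      rw [← spectrum.singleton_sub_eq]
      exact Set.sub_mem_sub rfl hx
    have := spectrum_nonneg_of_nonneg hnn hmem
    linarith
  -- m + ε ≤ ‖A‖
  have hmεN : m + ε ≤ ‖A‖ := by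
    have h0 : (0 : H →L[ℂ] H) ≤ (m + ε) • 1 := by
      rw [← Algebra.algebraMap_eq_smul_one, StarOrderedRing.nonneg_iff_spectrum_nonneg (R := ℝ) _
        (IsSelfAdjoint.algebraMap _ (isSelfAdjoint_iff.mpr rfl))]
      intro x hx
      have hxr := CFC.spectrum_algebraMap_subset (A := H →L[ℂ] H) (m + ε) hx
      simp only [Set.mem_singleton_iff] at hxr
      rw [hxr]
      positivity
    have hnorm := CStarAlgebra.norm_le_norm_of_nonneg_of_le h0 keyb
    calc m + ε = ‖(m + ε) • (1 : H →L[ℂ] H)‖ := by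
          rw [norm_smul, norm_one, mul_one, Real.norm_of_nonneg (by positivity)]
      _ ≤ ‖A‖ := hnorm
  -- key3 : B ≤ A - m • 1
  have key3 : B ≤ A - m • (1 : H →L[ℂ] H) := le_sub_comm.mpr key1
  have hCu : IsUnit (A - m • (1 : H →L[ℂ] H)) := CStarAlgebra.isUnit_of_le B key3 (hBu.isStrictlyPositive hB)
  have hC0 : (0 : H →L[ℂ] H) ≤ A - m • 1 := hB.trans key3
  -- key4 : inverse (A - m•1) ≤ inverse B
  have key4 : Ring.inverse (A - m • (1 : H →L[ℂ] H)) ≤ Ring.inverse B := by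
    have h := CStarAlgebra.inv_le_inv (a := hBu.unit) (b := hCu.unit)
      (by rw [hBu.unit_spec]; exact hB)
      (by rw [hBu.unit_spec, hCu.unit_spec]; exact key3)
    rw [← hBu.unit_spec, ← hCu.unit_spec, Ring.inverse_unit, Ring.inverse_unit]
    exact h
  -- cfc representations
  have hinvA : Ring.inverse A = cfc (fun x : ℝ => x⁻¹) A := by
    have h := cfc_inv_id (R := ℝ) hAu.unit (by rw [hAu.unit_spec]; exact hsA)
    rw [hAu.unit_spec] at h
    rw [h]
    conv_lhs => rw [← hAu.unit_spec]
    rw [Ring.inverse_unit]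
  have hC_eq : cfc (fun x : ℝ => x - m) A = A - m • (1 : H →L[ℂ] H) := by
    have h : cfc (fun x : ℝ => x - m) A
        = cfc (fun x : ℝ => x) A - cfc (fun _ : ℝ => m) A := cfc_sub _ _ A
    rw [cfc_id' ℝ A, cfc_const m A, Algebra.algebraMap_eq_smul_one] at h
    exact h
  have hCnz : ∀ x ∈ spectrum ℝ A, x - m ≠ 0 := fun x hx => by
    have := hspec_lb x hx; have : m < x := by linarith
    exact sub_ne_zero.mpr this.ne'
  have hinvC : Ring.inverse (A - m • (1 : H →L[ℂ] H)) = cfc (fun x : ℝ => (x - m)⁻¹) A := by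
    rw [← hC_eq, ← cfc_inv (fun x : ℝ => x - m) A hCnz]
  set c : ℝ := 1 / (‖A‖ - m) - 1 / ‖A‖ with hc
  have hAnz : ∀ x ∈ spectrum ℝ A, x ≠ 0 := fun x hx => by
    have := hspec_lb x hx
    have hx0 : (0:ℝ) < x := by linarith
    exact hx0.ne'
  have hcont_inv : ContinuousOn (fun x : ℝ => x⁻¹) (spectrum ℝ A) :=
    ContinuousOn.inv₀ continuousOn_id hAnz
  have hcont2 : ContinuousOn (fun x : ℝ => (x - m)⁻¹) (spectrum ℝ A) :=
    ContinuousOn.inv₀ (continuousOn_id.sub continuousOn_const) hCnz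
  -- key5
  have key5 : c • (1 : H →L[ℂ] H) + Ring.inverse A
      ≤ Ring.inverse (A - m • (1 : H →L[ℂ] H)) := by
    have hsum : cfc (fun x : ℝ => c + x⁻¹) A
        = cfc (fun _ : ℝ => c) A + cfc (fun x : ℝ => x⁻¹) A :=
      cfc_add (a := A) (fun _ : ℝ => c) (fun x : ℝ => x⁻¹) continuousOn_const hcont_inv
    rw [hinvA, hinvC, show c • (1 : H →L[ℂ] H) = cfc (fun _ : ℝ => c) A by
        rw [cfc_const c A, Algebra.algebraMap_eq_smul_one], ← hsum]
    rw [cfc_le_iff (fun x : ℝ => c + x⁻¹) _ A (continuousOn_const.add hcont_inv) hcont2 hsA]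
    intro x hx
    exact aux_scalar m ε ‖A‖ x hm_pos hε_pos (hspec_lb x hx) (hspec_ub x hx)
  calc (1 / (‖A‖ - m) - 1 / ‖A‖) • (1 : H →L[ℂ] H)
      ≤ Ring.inverse (A - m • (1 : H →L[ℂ] H)) - Ring.inverse A :=
        le_sub_iff_add_le.mpr key5
    _ ≤ Ring.inverse B - Ring.inverse A := sub_le_sub_right key4 _
end

section
/- Let A and B be positive invertible bounded linear operators on a complex Hilbert space with A ≥ B and A − B invertible, and set m = ‖(A−B)⁻¹‖⁻¹. Then B⁻¹ − A⁻¹ ≥ (m/((‖B‖ + m)·‖B‖))·I, where I is the identity operator. -/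
section Aux

variable {A : Type*} [CStarAlgebra A] [PartialOrder A] [StarOrderedRing A]

/-- A positive invertible element is bounded below by `‖a⁻¹‖⁻¹ • 1`. -/
lemma aux_algebraMap_le_of_isUnit [Nontrivial A] {a : A} (ha : 0 ≤ a) (hau : IsUnit a)
    {m : ℝ} (hm : m = ‖Ring.inverse a‖⁻¹) :
    algebraMap ℝ A m ≤ a := by
  have hsa : IsSelfAdjoint a := .of_nonneg ha
  refine algebraMap_le_of_le_spectrum (fun x hx => ?_) hsa
  obtain ⟨u, rfl⟩ := hau
  have hx0 : 0 ≤ x := spectrum_nonneg_of_nonneg ha hx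
  have hxne : x ≠ 0 := by
    rintro rfl
    exact spectrum.zero_notMem ℝ u.isUnit hx
  have hxpos : 0 < x := lt_of_le_of_ne hx0 (Ne.symm hxne)
  have hinv_mem : (x⁻¹ : ℝ) ∈ spectrum ℝ ((↑u⁻¹ : A)) := by
    have := (spectrum.inv_mem_iff (r := Units.mk0 x hxne) (a := u)).mp hx
    simpa using this
  have hnorm : x⁻¹ ≤ ‖(↑u⁻¹ : A)‖ := by
    have := spectrum.norm_le_norm_of_mem hinv_mem
    rwa [Real.norm_eq_abs, abs_of_nonneg (by positivity)] at this
  have hinvpos : (0 : ℝ) < x⁻¹ := by positivity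
  have : m ≤ (x⁻¹)⁻¹ := by
    rw [hm, Ring.inverse_unit]
    exact inv_anti₀ hinvpos hnorm
  simpa using this

lemma aux_main [Nontrivial A]
    (a b : A) (ha : 0 ≤ a) (hb : 0 ≤ b) (hau : IsUnit a) (hbu : IsUnit b)
    (hba : b ≤ a) (hab : IsUnit (a - b)) (m : ℝ) (hm : m = ‖Ring.inverse (a - b)‖⁻¹) :
    (m / ((‖b‖ + m) * ‖b‖)) • (1 : A) ≤ Ring.inverse b - Ring.inverse a := by
  have hsb : IsSelfAdjoint b := .of_nonneg hb
  have hm0 : 0 < m := by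
    rw [hm, inv_pos, norm_pos_iff]
    rw [← hab.unit_spec, Ring.inverse_unit]
    exact Units.ne_zero _
  have hb0 : 0 < ‖b‖ := norm_pos_iff.mpr hbu.ne_zero
  set k : ℝ := (‖b‖ + m) * ‖b‖ with hk
  have hk0 : 0 < k := by positivity
  -- Step 1: `m • 1 ≤ a - b`
  have h1 : algebraMap ℝ A m ≤ a - b :=
    aux_algebraMap_le_of_isUnit (sub_nonneg.mpr hba) hab hm
  have hm1 : (0 : A) ≤ algebraMap ℝ A m := by
    rw [Algebra.algebraMap_eq_smul_one]
    exact smul_nonneg hm0.le zero_le_one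
  have hmu : IsUnit (algebraMap ℝ A m) :=
    (isUnit_iff_ne_zero.mpr hm0.ne').map (algebraMap ℝ A)
  -- `c = b + m • 1`
  have hc0 : (0 : A) ≤ b + algebraMap ℝ A m := add_nonneg hb hm1
  have hcu : IsUnit (b + algebraMap ℝ A m) :=
    CStarAlgebra.isUnit_of_le _ (le_add_of_nonneg_left hb) (hmu.isStrictlyPositive hm1)
  have hca : b + algebraMap ℝ A m ≤ a :=
    calc b + algebraMap ℝ A m ≤ b + (a - b) := add_le_add_right h1 b
      _ = a := by abel
  obtain ⟨ua, rfl⟩ := hau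
  obtain ⟨ub, rfl⟩ := hbu
  obtain ⟨uc, huc⟩ := hcu
  -- Step 2: `a⁻¹ ≤ c⁻¹`
  have h2 : (↑ua⁻¹ : A) ≤ ↑uc⁻¹ :=
    CStarAlgebra.inv_le_inv (a := uc) (b := ua) (huc ▸ hc0) (huc ▸ hca)
  -- Step 3: bound `d⁻¹` below, where `d = c * b`
  set ud : Aˣ := uc * ub with hud
  have hud_val : (↑ud : A) = ((↑ub : A) + algebraMap ℝ A m) * ↑ub := by
    rw [hud, Units.val_mul, huc]
  have hadd : cfc (fun t : ℝ => t + m) (↑ub : A) = ↑ub + algebraMap ℝ A m := by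
    have := cfc_add_const m (id : ℝ → ℝ) (↑ub : A) (by fun_prop) hsb
    simpa [cfc_id ℝ (↑ub : A) hsb] using this
  have hd_cfc : (↑ud : A) = cfc (fun t : ℝ => (t + m) * t) (↑ub : A) := by
    rw [cfc_mul _ _ _ (by fun_prop) (by fun_prop), hadd, cfc_id' ℝ (↑ub : A) hsb, hud_val]
  have hd0 : (0 : A) ≤ ↑ud := by
    rw [hd_cfc]
    refine cfc_nonneg fun x hx => ?_
    have hx0 : 0 ≤ x := spectrum_nonneg_of_nonneg hb hx
    positivity
  have hd_norm : ‖(↑ud : A)‖ ≤ k := by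
    rw [hud_val, hk]
    calc ‖((↑ub : A) + algebraMap ℝ A m) * ↑ub‖
        ≤ ‖(↑ub : A) + algebraMap ℝ A m‖ * ‖(↑ub : A)‖ := norm_mul_le _ _
      _ ≤ (‖(↑ub : A)‖ + m) * ‖(↑ub : A)‖ := by
          refine mul_le_mul_of_nonneg_right ?_ (norm_nonneg _)
          refine (norm_add_le _ _).trans ?_
          rw [norm_algebraMap']
          simp [abs_of_nonneg hm0.le]
  have hd_le : (↑ud : A) ≤ algebraMap ℝ A k :=
    (CStarAlgebra.norm_le_iff_le_algebraMap _ hk0.le hd0).mp hd_norm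
  have hku : IsUnit (algebraMap ℝ A k) :=
    (isUnit_iff_ne_zero.mpr hk0.ne').map (algebraMap ℝ A)
  obtain ⟨uk, huk⟩ := hku
  have huk_inv : (↑uk⁻¹ : A) = algebraMap ℝ A k⁻¹ := by
    refine Units.inv_eq_of_mul_eq_one_right ?_
    rw [huk, ← map_mul, mul_inv_cancel₀ hk0.ne', map_one]
  have h3 : (↑uk⁻¹ : A) ≤ ↑ud⁻¹ :=
    CStarAlgebra.inv_le_inv (a := ud) (b := uk) hd0 (huk ▸ hd_le)
  -- the key algebraic identity
  have hkey : (↑ub⁻¹ : A) - ↑uc⁻¹ = m • (↑ud⁻¹ : A) := by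
    have h4 : (↑ub⁻¹ : A) * ((↑uc : A) - ↑ub) * ↑uc⁻¹ = ↑ub⁻¹ - ↑uc⁻¹ := by
      simp [sub_mul, mul_sub, mul_assoc]
    have h5 : (↑uc : A) - ↑ub = algebraMap ℝ A m := by
      rw [huc]; abel
    rw [hud, mul_inv_rev, Units.val_mul, ← h4, h5, Algebra.algebraMap_eq_smul_one]
    simp [mul_smul_comm, smul_mul_assoc]
  -- put everything together
  have hchain : (m / k) • (1 : A) ≤ (↑ub⁻¹ : A) - ↑uc⁻¹ := by
    rw [hkey, div_eq_mul_inv, mul_smul]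
    refine smul_le_smul_of_nonneg_left ?_ hm0.le
    calc k⁻¹ • (1 : A) = ↑uk⁻¹ := by
          rw [huk_inv, Algebra.algebraMap_eq_smul_one]
      _ ≤ ↑ud⁻¹ := h3
  calc (m / k) • (1 : A) ≤ (↑ub⁻¹ : A) - ↑uc⁻¹ := hchain
    _ ≤ (↑ub⁻¹ : A) - ↑ua⁻¹ := sub_le_sub_left h2 _
    _ = Ring.inverse (↑ub : A) - Ring.inverse (↑ua : A) := by
        rw [Ring.inverse_unit, Ring.inverse_unit]

end Aux

/-- if `A > B > 0` and `m = ‖(A-B)⁻¹‖⁻¹`, then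
`B⁻¹ - A⁻¹ ≥ (m / ((‖B‖ + m)·‖B‖)) • I`. -/
theorem stmt5 {H : Type*} [NormedAddCommGroup H] [InnerProductSpace ℂ H] [CompleteSpace H]
    (A B : H →L[ℂ] H) (hA : 0 ≤ A) (hB : 0 ≤ B) (hAu : IsUnit A) (hBu : IsUnit B)
    (hBA : B ≤ A) (hAB : IsUnit (A - B)) (m : ℝ) (hm : m = ‖Ring.inverse (A - B)‖⁻¹) :
    (m / ((‖B‖ + m) * ‖B‖)) • (1 : H →L[ℂ] H)
      ≤ Ring.inverse B - Ring.inverse A := by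
  obtain hS | hN := subsingleton_or_nontrivial (H →L[ℂ] H)
  · exact le_of_eq (Subsingleton.elim _ _)
  · exact aux_main A B hA hB hAu hBu hBA hAB m hm
end

section
/- Fix λ ∈ (−1, 0] and define f_λ(t) = t/(1 − λt). Let A and B be selfadjoint bounded linear operators on a complex Hilbert space with spectra contained in (−1,1), and suppose A − B ≥ m·I for some m > 0. Let M_B denote the maximum of the spectrum of B. Then f_λ(A) − f_λ(B) ≥ (f_λ(M_B + m) − f_λ(M_B))·I. -/
set_option maxHeartbeats 1000000 in
private lemma smul_op_nonneg {H : Type*} [NormedAddCommGroup H] [InnerProductSpace ℂ H]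
    [CompleteSpace H] {c : ℝ} (hc : 0 ≤ c) {T : H →L[ℂ] H} (hT : 0 ≤ T) : 0 ≤ c • T := by
  have hTsa : IsSelfAdjoint T := .of_nonneg hT
  rw [← cfc_const_mul_id c T hTsa]
  exact cfc_nonneg fun x hx => mul_nonneg hc (spectrum_nonneg_of_nonneg hT hx)


set_option maxHeartbeats 1000000 in
set_option synthInstance.maxHeartbeats 1000000 in
/-- Statement 11 (key lemma, case `λ ∈ (-1, 0]`): with `f_λ(t) = t/(1-λt)`, if `A, B`
are selfadjoint with spectra in `(-1,1)` and `A - B ≥ m·I` with `m > 0`, then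
`f_λ(A) - f_λ(B) ≥ (f_λ(M_B + m) - f_λ(M_B)) • I`, where `M_B = max sp(B)`. -/
theorem stmt11 {H : Type*} [NormedAddCommGroup H] [InnerProductSpace ℂ H] [CompleteSpace H]
    (lam : ℝ) (hlam : lam ∈ Set.Ioc (-1 : ℝ) 0) (A B : H →L[ℂ] H)
    (hA : IsSelfAdjoint A) (hB : IsSelfAdjoint B)
    (hsA : spectrum ℝ A ⊆ Set.Ioo (-1 : ℝ) 1) (hsB : spectrum ℝ B ⊆ Set.Ioo (-1 : ℝ) 1)
    (m : ℝ) (hm : 0 < m) (hAB : m • (1 : H →L[ℂ] H) ≤ A - B)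
    (MB : ℝ) (hMB : MB = sSup (spectrum ℝ B)) :
    ((MB + m) / (1 - lam * (MB + m)) - MB / (1 - lam * MB)) • (1 : H →L[ℂ] H)
      ≤ cfc (fun t : ℝ => t / (1 - lam * t)) A - cfc (fun t : ℝ => t / (1 - lam * t)) B := by
  rcases subsingleton_or_nontrivial (H →L[ℂ] H) with hsub | hnt
  · exact le_of_eq (Subsingleton.elim _ _)
  obtain ⟨hlam1, hlam0⟩ := hlam
  rcases hlam0.eq_or_lt with h0 | hneg
  · -- case lam = 0
    subst h0
    have hfid : (fun t : ℝ => t / (1 - 0 * t)) = fun t : ℝ => t := by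
      funext t; norm_num
    rw [hfid, cfc_id' ℝ A hA, cfc_id' ℝ B hB]
    have hr : (MB + m) / (1 - 0 * (MB + m)) - MB / (1 - 0 * MB) = m := by
      norm_num
    rw [hr]
    exact hAB
  -- case lam < 0
  have hlamne : lam ≠ 0 := hneg.ne
  have hcpos : 0 < -lam⁻¹ := by
    have : lam⁻¹ < 0 := inv_neg''.mpr hneg
    linarith
  have hposA : ∀ t ∈ spectrum ℝ A, 0 < 1 - lam * t := by
    intro t ht
    obtain ⟨h1, h2⟩ := hsA ht
    nlinarith [mul_pos (show (0:ℝ) < -lam by linarith) (show (0:ℝ) < t + 1 by linarith)]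
  have hposB : ∀ t ∈ spectrum ℝ B, 0 < 1 - lam * t := by
    intro t ht
    obtain ⟨h1, h2⟩ := hsB ht
    nlinarith [mul_pos (show (0:ℝ) < -lam by linarith) (show (0:ℝ) < t + 1 by linarith)]
  have hposB' : ∀ t ∈ spectrum ℝ B, 0 < 1 - lam * t - lam * m := by
    intro t ht
    have := hposB t ht
    nlinarith [mul_pos (show (0:ℝ) < -lam by linarith) hm]
  have hcontA : ContinuousOn (fun t : ℝ => (1 - lam * t)⁻¹) (spectrum ℝ A) :=
    ContinuousOn.inv₀ (by fun_prop) fun t ht => (hposA t ht).ne'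
  have hcontB : ContinuousOn (fun t : ℝ => (1 - lam * t)⁻¹) (spectrum ℝ B) :=
    ContinuousOn.inv₀ (by fun_prop) fun t ht => (hposB t ht).ne'
  have hcontB' : ContinuousOn (fun t : ℝ => (1 - lam * t - lam * m)⁻¹) (spectrum ℝ B) :=
    ContinuousOn.inv₀ (by fun_prop) fun t ht => (hposB' t ht).ne'
  -- the units 1 - lam • A and 1 - lam • B - (lam*m) • 1
  have hXiX : cfc (fun t : ℝ => 1 - lam * t) A * cfc (fun t : ℝ => (1 - lam * t)⁻¹) A = 1 := by
    rw [← cfc_mul _ _ A (by fun_prop) hcontA]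
    rw [cfc_congr (g := fun _ : ℝ => (1:ℝ)) fun t ht => mul_inv_cancel₀ (hposA t ht).ne',
      cfc_const 1 A hA, map_one]
  have hiXX : cfc (fun t : ℝ => (1 - lam * t)⁻¹) A * cfc (fun t : ℝ => 1 - lam * t) A = 1 := by
    rw [← cfc_mul _ _ A hcontA (by fun_prop)]
    rw [cfc_congr (g := fun _ : ℝ => (1:ℝ)) fun t ht => inv_mul_cancel₀ (hposA t ht).ne',
      cfc_const 1 A hA, map_one]
  have hYiY : cfc (fun t : ℝ => 1 - lam * t - lam * m) B
      * cfc (fun t : ℝ => (1 - lam * t - lam * m)⁻¹) B = 1 := by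
    rw [← cfc_mul _ _ B (by fun_prop) hcontB']
    rw [cfc_congr (g := fun _ : ℝ => (1:ℝ)) fun t ht => mul_inv_cancel₀ (hposB' t ht).ne',
      cfc_const 1 B hB, map_one]
  have hiYY : cfc (fun t : ℝ => (1 - lam * t - lam * m)⁻¹) B
      * cfc (fun t : ℝ => 1 - lam * t - lam * m) B = 1 := by
    rw [← cfc_mul _ _ B hcontB' (by fun_prop)]
    rw [cfc_congr (g := fun _ : ℝ => (1:ℝ)) fun t ht => inv_mul_cancel₀ (hposB' t ht).ne',
      cfc_const 1 B hB, map_one]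
  have hYpos : 0 ≤ cfc (fun t : ℝ => 1 - lam * t - lam * m) B :=
    cfc_nonneg fun t ht => (hposB' t ht).le
  have hXeq : cfc (fun t : ℝ => 1 - lam * t) A = 1 - lam • A := by
    rw [cfc_sub _ _ A (by fun_prop) (by fun_prop), cfc_const 1 A hA, map_one,
      cfc_const_mul_id lam A hA]
  have hYeq : cfc (fun t : ℝ => 1 - lam * t - lam * m) B = 1 - lam • B - (lam * m) • 1 := by
    rw [cfc_sub _ _ B (by fun_prop) (by fun_prop), cfc_sub _ _ B (by fun_prop) (by fun_prop),
      cfc_const 1 B hB, map_one, cfc_const_mul_id lam B hB, cfc_const (lam * m) B hB,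
      Algebra.algebraMap_eq_smul_one]
  have hYX : cfc (fun t : ℝ => 1 - lam * t - lam * m) B ≤ cfc (fun t : ℝ => 1 - lam * t) A := by
    rw [hXeq, hYeq, ← sub_nonneg]
    have h0 : (0 : H →L[ℂ] H) ≤ A - B - m • 1 := by
      rw [sub_nonneg]; exact hAB
    have h1 := smul_op_nonneg (c := -lam) (by linarith) h0
    have heq : (1 - lam • A) - (1 - lam • B - (lam * m) • 1)
        = (-lam) • (A - B - m • (1 : H →L[ℂ] H)) := by module
    rwa [heq]
  have hinv : cfc (fun t : ℝ => (1 - lam * t)⁻¹) A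
      ≤ cfc (fun t : ℝ => (1 - lam * t - lam * m)⁻¹) B :=
    CStarAlgebra.inv_le_inv (a := ⟨_, _, hYiY, hiYY⟩) (b := ⟨_, _, hXiX, hiXX⟩) hYpos hYX

  -- rewrite cfc f in terms of inverses
  have hfA : cfc (fun t : ℝ => t / (1 - lam * t)) A
      = (-lam⁻¹) • 1 - (-lam⁻¹) • cfc (fun t : ℝ => (1 - lam * t)⁻¹) A := by
    rw [cfc_congr (g := fun t : ℝ => -lam⁻¹ - -lam⁻¹ * (1 - lam * t)⁻¹) fun t ht => by
      have h := (hposA t ht).ne'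
      rw [div_eq_iff h, sub_mul, mul_assoc, inv_mul_cancel₀ h]; field_simp; ring]
    rw [cfc_sub (fun _ : ℝ => -lam⁻¹) (fun t : ℝ => -lam⁻¹ * (1 - lam * t)⁻¹) A (by fun_prop) (continuousOn_const.mul hcontA), cfc_const (-lam⁻¹) A hA,
      Algebra.algebraMap_eq_smul_one, cfc_const_mul _ _ A hcontA]
  have hfB : cfc (fun t : ℝ => t / (1 - lam * t)) B
      = (-lam⁻¹) • 1 - (-lam⁻¹) • cfc (fun t : ℝ => (1 - lam * t)⁻¹) B := by
    rw [cfc_congr (g := fun t : ℝ => -lam⁻¹ - -lam⁻¹ * (1 - lam * t)⁻¹) fun t ht => by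
      have h := (hposB t ht).ne'
      rw [div_eq_iff h, sub_mul, mul_assoc, inv_mul_cancel₀ h]; field_simp; ring]
    rw [cfc_sub (fun _ : ℝ => -lam⁻¹) (fun t : ℝ => -lam⁻¹ * (1 - lam * t)⁻¹) B (by fun_prop) (continuousOn_const.mul hcontB), cfc_const (-lam⁻¹) B hB,
      Algebra.algebraMap_eq_smul_one, cfc_const_mul _ _ B hcontB]
  -- spectrum facts for B and MB
  have hbdd : BddAbove (spectrum ℝ B) := (spectrum.isCompact (𝕜 := ℝ) B).bddAbove
  have hMBb : ∀ t ∈ spectrum ℝ B, t ≤ MB := fun t ht => hMB ▸ le_csSup hbdd ht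
  have hMBmem : MB ∈ spectrum ℝ B := by
    rw [hMB]
    exact (spectrum.isCompact (𝕜 := ℝ) B).sSup_mem hB.spectrum_nonempty
  have hdMB : 0 < 1 - lam * MB := hposB MB hMBmem
  have hdMBm : 0 < 1 - lam * MB - lam * m := hposB' MB hMBmem
  -- the scalar inequality on the spectrum of B
  have hscalar : ∀ t ∈ spectrum ℝ B,
      (MB + m) / (1 - lam * (MB + m)) - MB / (1 - lam * MB)
        ≤ -lam⁻¹ * (1 - lam * t)⁻¹ - -lam⁻¹ * (1 - lam * t - lam * m)⁻¹ := by
    intro t ht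
    have hd1 : 0 < 1 - lam * t := hposB t ht
    have hd2 : 0 < 1 - lam * t - lam * m := hposB' t ht
    have htMB := hMBb t ht
    have e0 : 1 - lam * (MB + m) = 1 - lam * MB - lam * m := by ring
    have e1 : (MB + m) / (1 - lam * (MB + m)) - MB / (1 - lam * MB)
        = m / ((1 - lam * MB) * (1 - lam * MB - lam * m)) := by
      rw [e0, div_sub_div _ _ hdMBm.ne' hdMB.ne', div_eq_div_iff (mul_pos hdMBm hdMB).ne' (mul_pos hdMB hdMBm).ne']; ring
    have e2 : -lam⁻¹ * (1 - lam * t)⁻¹ - -lam⁻¹ * (1 - lam * t - lam * m)⁻¹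
        = m / ((1 - lam * t) * (1 - lam * t - lam * m)) := by
      field_simp; ring
    rw [e1, e2]
    have hst : 1 - lam * t ≤ 1 - lam * MB := by
      have := mul_le_mul_of_nonpos_left htMB hneg.le
      linarith
    have hPQ : (1 - lam * t) * (1 - lam * t - lam * m)
        ≤ (1 - lam * MB) * (1 - lam * MB - lam * m) := by
      nlinarith [mul_nonneg (sub_nonneg.2 hst)
        (show (0:ℝ) ≤ (1 - lam * MB) + (1 - lam * t) - lam * m by linarith)]
    gcongr
  -- final assembly
  have hg : ((MB + m) / (1 - lam * (MB + m)) - MB / (1 - lam * MB)) • (1 : H →L[ℂ] H)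
      ≤ cfc (fun t : ℝ => -lam⁻¹ * (1 - lam * t)⁻¹ - -lam⁻¹ * (1 - lam * t - lam * m)⁻¹) B := by
    rw [← Algebra.algebraMap_eq_smul_one]
    exact algebraMap_le_cfc _ _ B hscalar
      ((continuousOn_const.mul hcontB).sub (continuousOn_const.mul hcontB')) hB
  have hgsplit : cfc (fun t : ℝ => -lam⁻¹ * (1 - lam * t)⁻¹ - -lam⁻¹ * (1 - lam * t - lam * m)⁻¹) B
      = (-lam⁻¹) • cfc (fun t : ℝ => (1 - lam * t)⁻¹) B
        - (-lam⁻¹) • cfc (fun t : ℝ => (1 - lam * t - lam * m)⁻¹) B := by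
    rw [cfc_sub (fun t : ℝ => -lam⁻¹ * (1 - lam * t)⁻¹) (fun t : ℝ => -lam⁻¹ * (1 - lam * t - lam * m)⁻¹) B (continuousOn_const.mul hcontB) (continuousOn_const.mul hcontB'),
      cfc_const_mul _ _ B hcontB, cfc_const_mul _ _ B hcontB']
  have hsmul : (-lam⁻¹) • cfc (fun t : ℝ => (1 - lam * t)⁻¹) A
      ≤ (-lam⁻¹) • cfc (fun t : ℝ => (1 - lam * t - lam * m)⁻¹) B := by
    have h := smul_op_nonneg hcpos.le (sub_nonneg.2 hinv)
    rw [smul_sub] at h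
    exact sub_nonneg.1 h
  calc ((MB + m) / (1 - lam * (MB + m)) - MB / (1 - lam * MB)) • (1 : H →L[ℂ] H)
      ≤ cfc (fun t : ℝ => -lam⁻¹ * (1 - lam * t)⁻¹ - -lam⁻¹ * (1 - lam * t - lam * m)⁻¹) B := hg
    _ = (-lam⁻¹) • cfc (fun t : ℝ => (1 - lam * t)⁻¹) B
        - (-lam⁻¹) • cfc (fun t : ℝ => (1 - lam * t - lam * m)⁻¹) B := hgsplit
    _ ≤ (-lam⁻¹) • cfc (fun t : ℝ => (1 - lam * t)⁻¹) B
        - (-lam⁻¹) • cfc (fun t : ℝ => (1 - lam * t)⁻¹) A := by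
      exact sub_le_sub_left hsmul _
    _ = cfc (fun t : ℝ => t / (1 - lam * t)) A - cfc (fun t : ℝ => t / (1 - lam * t)) B := by
      rw [hfA, hfB]; abel
end

section
/- Fix λ ∈ (0, 1) and define f_λ(t) = t/(1 − λt). Let A and B be selfadjoint bounded linear operators on a complex Hilbert space with spectra contained in (−1,1), and suppose A − B ≥ m·I for some m > 0. Let m_A denote the minimum of the spectrum of A. Then f_λ(A) − f_λ(B) ≥ (f_λ(m_A) − f_λ(m_A − m))·I. -/
set_option synthInstance.maxHeartbeats 1000000
set_option maxHeartbeats 1000000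

section Aux

variable {H : Type*} [NormedAddCommGroup H] [InnerProductSpace ℂ H] [CompleteSpace H]

private lemma stmt12_smul_nonneg (r : ℝ) (hr : 0 ≤ r) (Z : H →L[ℂ] H) (hZ : 0 ≤ Z) :
    0 ≤ r • Z := by
  have hZ' : IsSelfAdjoint Z := .of_nonneg hZ
  have : r • Z = cfc (fun t : ℝ => r * t) Z := (cfc_const_mul_id r Z).symm
  rw [this]
  exact cfc_nonneg fun t ht => mul_nonneg hr (spectrum_nonneg_of_nonneg hZ ht)

private lemma stmt12_key_real (lam m s t : ℝ) (hl0 : 0 < lam) (hl1 : lam < 1) (hm : 0 < m)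
    (hst : s ≤ t) (ht1 : t < 1) :
    s / (1 - lam * s) - (s - m) / (1 - lam * (s - m))
      ≤ t / (1 - lam * t) - (t - m) / (1 - lam * (t - m)) := by
  have h1 : 0 < 1 - lam * t := by nlinarith [mul_pos hl0 (sub_pos.mpr ht1)]
  have h2 : 0 < 1 - lam * s := by nlinarith [mul_pos hl0 (sub_pos.mpr (lt_of_le_of_lt hst ht1))]
  have h3 : 0 < 1 - lam * (t - m) := by nlinarith [mul_pos hl0 hm]
  have h4 : 0 < 1 - lam * (s - m) := by nlinarith [mul_pos hl0 hm]
  have e1 : s / (1 - lam * s) - (s - m) / (1 - lam * (s - m))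
      = m / ((1 - lam * s) * (1 - lam * (s - m))) := by
    rw [div_sub_div _ _ h2.ne' h4.ne']
    congr 1
    ring
  have e2 : t / (1 - lam * t) - (t - m) / (1 - lam * (t - m))
      = m / ((1 - lam * t) * (1 - lam * (t - m))) := by
    rw [div_sub_div _ _ h1.ne' h3.ne']
    congr 1
    ring
  rw [e1, e2]
  apply div_le_div_of_nonneg_left hm.le (by positivity)
  nlinarith [mul_nonneg (mul_nonneg hl0.le hl0.le) (mul_nonneg (sub_nonneg.mpr hst) hm.le),
    mul_nonneg (mul_nonneg hl0.le (sub_nonneg.mpr hst)) (sub_pos.mpr ht1).le,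
    mul_nonneg (mul_nonneg hl0.le (sub_nonneg.mpr hst)) (sub_pos.mpr (lt_of_le_of_lt hst ht1)).le,
    mul_nonneg (sub_nonneg.mpr hst) (sub_pos.mpr hl1).le]

private lemma stmt12_aux (lam c : ℝ) (hlam : 0 < lam) (X : H →L[ℂ] H) (hX : IsSelfAdjoint X)
    (hpos : ∀ t ∈ spectrum ℝ X, 0 < 1 - lam * (t - c)) :
    ∃ U : (H →L[ℂ] H)ˣ,
      (U : H →L[ℂ] H) = 1 - lam • X + (lam * c) • 1 ∧
      0 ≤ (U : H →L[ℂ] H) ∧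
      (1 / lam) • (↑U⁻¹ : H →L[ℂ] H) - (1 / lam) • 1
        = cfc (fun t : ℝ => (t - c) / (1 - lam * (t - c))) X := by
  have hne : ∀ t ∈ spectrum ℝ X, (1 - lam * (t - c)) ≠ 0 := fun t ht => (hpos t ht).ne'
  have hcont : ContinuousOn (fun t : ℝ => (1 - lam * (t - c))⁻¹) (spectrum ℝ X) :=
    ContinuousOn.inv₀ (by fun_prop) hne
  have mul1 : cfc (fun t : ℝ => 1 - lam * (t - c)) X
      * cfc (fun t : ℝ => (1 - lam * (t - c))⁻¹) X = 1 := by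
    rw [← cfc_mul _ _ X (by fun_prop) hcont]
    calc cfc (fun t : ℝ => (1 - lam * (t - c)) * (1 - lam * (t - c))⁻¹) X
        = cfc (fun _ : ℝ => (1 : ℝ)) X := cfc_congr fun t ht => mul_inv_cancel₀ (hne t ht)
      _ = 1 := by rw [cfc_const _ _ hX, map_one]
  have mul2 : cfc (fun t : ℝ => (1 - lam * (t - c))⁻¹) X
      * cfc (fun t : ℝ => 1 - lam * (t - c)) X = 1 := by
    rw [← cfc_mul _ _ X hcont (by fun_prop)]
    calc cfc (fun t : ℝ => (1 - lam * (t - c))⁻¹ * (1 - lam * (t - c))) X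
        = cfc (fun _ : ℝ => (1 : ℝ)) X := cfc_congr fun t ht => inv_mul_cancel₀ (hne t ht)
      _ = 1 := by rw [cfc_const _ _ hX, map_one]
  refine ⟨⟨_, _, mul1, mul2⟩, ?_, ?_, ?_⟩
  · show cfc (fun t : ℝ => 1 - lam * (t - c)) X = 1 - lam • X + (lam * c) • 1
    calc cfc (fun t : ℝ => 1 - lam * (t - c)) X
        = cfc (fun t : ℝ => (1 + lam * c) - lam * t) X := cfc_congr fun t _ => by ring
      _ = cfc (fun _ : ℝ => (1 + lam * c)) X - cfc (fun t : ℝ => lam * t) X :=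
          cfc_sub _ _ X (by fun_prop) (by fun_prop)
      _ = algebraMap ℝ (H →L[ℂ] H) (1 + lam * c) - lam • X := by
          rw [cfc_const _ _ hX, cfc_const_mul_id lam X]
      _ = 1 - lam • X + (lam * c) • 1 := by
          rw [Algebra.algebraMap_eq_smul_one, add_smul, one_smul]
          abel
  · show (0 : H →L[ℂ] H) ≤ cfc (fun t : ℝ => 1 - lam * (t - c)) X
    exact cfc_nonneg fun t ht => (hpos t ht).le
  · show (1 / lam) • cfc (fun t : ℝ => (1 - lam * (t - c))⁻¹) X - (1 / lam) • 1
      = cfc (fun t : ℝ => (t - c) / (1 - lam * (t - c))) X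
    have : cfc (fun t : ℝ => (t - c) / (1 - lam * (t - c))) X
        = cfc (fun t : ℝ => (1 / lam) * (1 - lam * (t - c))⁻¹ - (1 / lam)) X := by
      apply cfc_congr
      intro t ht
      have hd : 1 - lam * (t - c) ≠ 0 := hne t ht
      have hl : lam ≠ 0 := hlam.ne'
      show (t - c) / (1 - lam * (t - c)) = 1 / lam * (1 - lam * (t - c))⁻¹ - 1 / lam
      rw [inv_eq_one_div]
      rw [div_eq_iff hd, sub_mul, mul_assoc, one_div_mul_cancel hd, mul_one]
      field_simp
      ring
    have hc1 : ContinuousOn (fun t : ℝ => 1 / lam * (1 - lam * (t - c))⁻¹) (spectrum ℝ X) :=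
      ContinuousOn.mul continuousOn_const hcont
    have hc2 : ContinuousOn (fun _ : ℝ => 1 / lam) (spectrum ℝ X) := continuousOn_const
    rw [this, cfc_sub _ _ X hc1 hc2, cfc_const_mul _ _ X hcont, cfc_const _ _ hX,
      Algebra.algebraMap_eq_smul_one]

end Aux

/-- key lemma, case `λ ∈ (0, 1)`: with `f_λ(t) = t/(1-λt)`, if `A, B`
are selfadjoint with spectra in `(-1,1)` and `A - B ≥ m·I` with `m > 0`, then
`f_λ(A) - f_λ(B) ≥ (f_λ(m_A) - f_λ(m_A - m)) • I`, where `m_A = min sp(A)`. -/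
theorem stmt12 {H : Type*} [NormedAddCommGroup H] [InnerProductSpace ℂ H] [CompleteSpace H]
    (lam : ℝ) (hlam : lam ∈ Set.Ioo (0 : ℝ) 1) (A B : H →L[ℂ] H)
    (hA : IsSelfAdjoint A) (hB : IsSelfAdjoint B)
    (hsA : spectrum ℝ A ⊆ Set.Ioo (-1 : ℝ) 1) (hsB : spectrum ℝ B ⊆ Set.Ioo (-1 : ℝ) 1)
    (m : ℝ) (hm : 0 < m) (hAB : m • (1 : H →L[ℂ] H) ≤ A - B)
    (mA : ℝ) (hmA : mA = sInf (spectrum ℝ A)) :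
    (mA / (1 - lam * mA) - (mA - m) / (1 - lam * (mA - m))) • (1 : H →L[ℂ] H)
      ≤ cfc (fun t : ℝ => t / (1 - lam * t)) A - cfc (fun t : ℝ => t / (1 - lam * t)) B := by
  obtain ⟨hl0, hl1⟩ := hlam
  -- positivity of the relevant denominators on the spectra
  have hposB : ∀ t ∈ spectrum ℝ B, 0 < 1 - lam * (t - 0) := by
    intro t ht
    have h1 := (hsB ht).2
    nlinarith [mul_pos hl0 (sub_pos.mpr h1)]
  have hposA : ∀ t ∈ spectrum ℝ A, 0 < 1 - lam * (t - 0) := by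
    intro t ht
    have h1 := (hsA ht).2
    nlinarith [mul_pos hl0 (sub_pos.mpr h1)]
  have hposA' : ∀ t ∈ spectrum ℝ A, 0 < 1 - lam * (t - m) := by
    intro t ht
    have h1 := (hsA ht).2
    nlinarith [mul_pos hl0 (sub_pos.mpr h1), mul_pos hl0 hm]
  obtain ⟨UB, hUBval, hUBpos, hUBinv⟩ := stmt12_aux lam 0 hl0 B hB hposB
  obtain ⟨UA', hUA'val, hUA'pos, hUA'inv⟩ := stmt12_aux lam m hl0 A hA hposA'
  -- UA' ≤ UB as elements
  have hle : (UA' : H →L[ℂ] H) ≤ (UB : H →L[ℂ] H) := by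
    rw [← sub_nonneg, hUBval, hUA'val]
    have : (1 : H →L[ℂ] H) - lam • B + (lam * 0) • 1 - (1 - lam • A + (lam * m) • 1)
        = lam • (A - B - m • 1) := by
      rw [mul_zero, zero_smul, smul_sub, smul_sub, smul_smul]
      abel
    rw [this]
    exact stmt12_smul_nonneg lam hl0.le _ (sub_nonneg.mpr hAB)
  -- inverse monotonicity
  have hinv : (↑UB⁻¹ : H →L[ℂ] H) ≤ (↑UA'⁻¹ : H →L[ℂ] H) :=
    CStarAlgebra.inv_le_inv hUA'pos hle
  -- cfc f B ≤ cfc h A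
  have hfB : cfc (fun t : ℝ => t / (1 - lam * t)) B
      = (1 / lam) • (↑UB⁻¹ : H →L[ℂ] H) - (1 / lam) • 1 := by
    rw [hUBinv]
    exact cfc_congr fun t _ => by norm_num
  have hBle : cfc (fun t : ℝ => t / (1 - lam * t)) B
      ≤ cfc (fun t : ℝ => (t - m) / (1 - lam * (t - m))) A := by
    rw [hfB, ← hUA'inv]
    apply sub_le_sub_right
    rw [← sub_nonneg, ← smul_sub]
    exact stmt12_smul_nonneg _ (by positivity) _ (sub_nonneg.mpr hinv)
  -- the constant bound
  have hbdd : BddBelow (spectrum ℝ A) := ⟨-1, fun x hx => (hsA hx).1.le⟩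
  have hkey : ∀ t ∈ spectrum ℝ A,
      mA / (1 - lam * mA) - (mA - m) / (1 - lam * (mA - m))
        ≤ t / (1 - lam * t) - (t - m) / (1 - lam * (t - m)) := by
    intro t ht
    have hst : mA ≤ t := hmA ▸ csInf_le hbdd ht
    exact stmt12_key_real lam m mA t hl0 hl1 hm hst (hsA ht).2
  have hcontA : ContinuousOn (fun t : ℝ => t / (1 - lam * t)) (spectrum ℝ A) :=
    ContinuousOn.div (by fun_prop) (by fun_prop) fun t ht => by
      simpa using (hposA t ht).ne'
  have hcontA' : ContinuousOn (fun t : ℝ => (t - m) / (1 - lam * (t - m))) (spectrum ℝ A) :=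
    ContinuousOn.div (by fun_prop) (by fun_prop) fun t ht => (hposA' t ht).ne'
  have hconst : (mA / (1 - lam * mA) - (mA - m) / (1 - lam * (mA - m))) • (1 : H →L[ℂ] H)
      ≤ cfc (fun t : ℝ => t / (1 - lam * t)) A
        - cfc (fun t : ℝ => (t - m) / (1 - lam * (t - m))) A := by
    rw [← cfc_sub _ _ A hcontA hcontA', ← Algebra.algebraMap_eq_smul_one]
    exact algebraMap_le_cfc _ _ A hkey (hcontA.sub hcontA')
  calc (mA / (1 - lam * mA) - (mA - m) / (1 - lam * (mA - m))) • (1 : H →L[ℂ] H)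
      ≤ cfc (fun t : ℝ => t / (1 - lam * t)) A
        - cfc (fun t : ℝ => (t - m) / (1 - lam * (t - m))) A := hconst
    _ ≤ cfc (fun t : ℝ => t / (1 - lam * t)) A - cfc (fun t : ℝ => t / (1 - lam * t)) B :=
        sub_le_sub_left hBle _
end

section
/- Let A and B be positive bounded linear operators on a complex Hilbert space with A ≥ B and A − B invertible, and let 0 < r ≤ 1. Then A^r − B^r is positive and invertible, i.e., A^r > B^r. (The function t ↦ t^r is strictly operator monotone on [0,∞).) -/
open scoped NNReal ENNReal
open CFC

section SR
variable {A : Type*} [CStarAlgebra A]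

lemma my_spectralRadius_mul_comm (a b : A) :
    spectralRadius ℂ (a * b) = spectralRadius ℂ (b * a) := by
  have key : ∀ x y : A, spectralRadius ℂ (x * y) ≤ spectralRadius ℂ (y * x) := by
    intro x y
    refine iSup₂_le fun k hk => ?_
    rcases eq_or_ne k 0 with rfl | hk0
    · simp
    · have hmem2 : k ∈ spectrum ℂ (y * x) := by
        have heq := spectrum.nonzero_mul_comm (𝕜 := ℂ) x y
        have hmem : k ∈ spectrum ℂ (x * y) \ {0} := ⟨hk, by simpa using hk0⟩
        rw [heq] at hmem
        exact hmem.1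
      exact le_iSup₂ (f := fun k (_ : k ∈ spectrum ℂ (y * x)) => (‖k‖₊ : ℝ≥0∞)) k hmem2
  exact le_antisymm (key a b) (key b a)

end SR

namespace LH
variable {A : Type*} [CStarAlgebra A] [PartialOrder A] [StarOrderedRing A]

variable {a b : A}

lemma isUnit_rpow (hau : IsUnit a) (w : ℝ) (ha : 0 ≤ a := by cfc_tac) : IsUnit (a ^ w) :=
  ⟨⟨a ^ w, a ^ (-w), rpow_mul_rpow_neg w (hau.isStrictlyPositive ha),
    rpow_neg_mul_rpow w (hau.isStrictlyPositive ha)⟩, rfl⟩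

lemma star_mul_rpow (hau : IsUnit a) (hbu : IsUnit b) (u v : ℝ)
    (ha : 0 ≤ a := by cfc_tac) (hb : 0 ≤ b := by cfc_tac) :
    star (b ^ u * a ^ v) = a ^ v * b ^ u := by
  rw [star_mul, IsSelfAdjoint.of_nonneg rpow_nonneg, IsSelfAdjoint.of_nonneg rpow_nonneg]

/-- `b ^ w ≤ a ^ w` iff `‖b ^ (w/2) * a ^ (-(w/2))‖ ≤ 1`. -/
lemma le_rpow_iff_norm (hau : IsUnit a) (hbu : IsUnit b) {w : ℝ} (hw : 0 < w)
    (ha : 0 ≤ a := by cfc_tac) (hb : 0 ≤ b := by cfc_tac) :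
    b ^ w ≤ a ^ w ↔ ‖b ^ (w / 2) * a ^ (-(w / 2))‖ ≤ 1 := by
  have h1 : sqrt (b ^ w) = b ^ (w / 2) :=
    sqrt_rpow hbu hw.ne'
  have h2 : (a ^ w) ^ (-(1/2) : ℝ) = a ^ (-(w / 2)) := by
    rw [rpow_rpow a w _ hw.ne' (hau.isStrictlyPositive ha)]
    congr 1
    ring
  rw [le_iff_norm_sqrt_mul_rpow (b ^ w) (a ^ w) rpow_nonneg ((isUnit_rpow hau w).isStrictlyPositive rpow_nonneg), h1, h2]


section Nontriv
variable [Nontrivial A] {a b : A}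

lemma sq_nnnorm_eq (hau : IsUnit a) (hbu : IsUnit b) (u : ℝ)
    (ha : 0 ≤ a := by cfc_tac) (hb : 0 ≤ b := by cfc_tac) :
    ((‖b ^ u * a ^ (-u)‖₊ : ℝ≥0∞)) ^ 2 =
      spectralRadius ℂ (b ^ (2 * u) * a ^ (-(2 * u))) := by
  have h0a := hau
  have h0b := hbu
  have hstar : star (b ^ u * a ^ (-u)) = a ^ (-u) * b ^ u := star_mul_rpow hau hbu u (-u)
  have hsq : star (b ^ u * a ^ (-u)) * (b ^ u * a ^ (-u)) =
      a ^ (-u) * b ^ (2 * u) * a ^ (-u) := by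
    rw [hstar]
    have : b ^ (2 * u) = b ^ u * b ^ u := by
      rw [two_mul, rpow_add h0b]
    rw [this]
    noncomm_ring
  have hy : IsSelfAdjoint (a ^ (-u) * b ^ (2 * u) * a ^ (-u)) := by
    rw [← hsq]
    exact IsSelfAdjoint.star_mul_self _
  calc ((‖b ^ u * a ^ (-u)‖₊ : ℝ≥0∞)) ^ 2
      = (‖star (b ^ u * a ^ (-u)) * (b ^ u * a ^ (-u))‖₊ : ℝ≥0∞) := by
        rw [CStarRing.nnnorm_star_mul_self]; push_cast; ring
    _ = (‖a ^ (-u) * b ^ (2 * u) * a ^ (-u)‖₊ : ℝ≥0∞) := by rw [hsq]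
    _ = spectralRadius ℂ (a ^ (-u) * b ^ (2 * u) * a ^ (-u)) :=
        (hy.spectralRadius_eq_nnnorm).symm
    _ = spectralRadius ℂ (a ^ (-u) * (a ^ (-u) * b ^ (2 * u))) := by
        rw [my_spectralRadius_mul_comm (a ^ (-u) * b ^ (2 * u)) (a ^ (-u))]
    _ = spectralRadius ℂ (b ^ (2 * u) * a ^ (-(2 * u))) := by
        rw [← mul_assoc, ← rpow_add h0a, my_spectralRadius_mul_comm]
        congr 2
        ring

lemma N_half {u : ℝ} (hau : IsUnit a) (hbu : IsUnit b)
    (h : ‖b ^ u * a ^ (-u)‖₊ ≤ 1)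
    (ha : 0 ≤ a := by cfc_tac) (hb : 0 ≤ b := by cfc_tac) :
    ‖b ^ (u / 2) * a ^ (-(u / 2))‖₊ ≤ 1 := by
  have key := sq_nnnorm_eq hau hbu (u / 2) (a := a) (b := b)
  have h2 : (2 : ℝ) * (u / 2) = u := by ring
  rw [h2] at key
  have hle : ((‖b ^ (u / 2) * a ^ (-(u / 2))‖₊ : ℝ≥0∞)) ^ 2 ≤ 1 := by
    rw [key]
    calc spectralRadius ℂ (b ^ u * a ^ (-u)) ≤ (‖b ^ u * a ^ (-u)‖₊ : ℝ≥0∞) :=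
          spectrum.spectralRadius_le_nnnorm _
      _ ≤ 1 := by exact_mod_cast h
  have hle' : ‖b ^ (u / 2) * a ^ (-(u / 2))‖₊ ^ 2 ≤ 1 := by exact_mod_cast hle
  exact pow_le_one_iff_of_nonneg (by positivity) two_ne_zero |>.mp hle'

lemma N_mid {u v : ℝ} (hau : IsUnit a) (hbu : IsUnit b)
    (h1 : ‖b ^ u * a ^ (-u)‖₊ ≤ 1) (h2 : ‖b ^ v * a ^ (-v)‖₊ ≤ 1)
    (ha : 0 ≤ a := by cfc_tac) (hb : 0 ≤ b := by cfc_tac) :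
    ‖b ^ ((u + v) / 2) * a ^ (-((u + v) / 2))‖₊ ≤ 1 := by
  have h0a := hau
  have h0b := hbu
  have key := sq_nnnorm_eq hau hbu ((u + v) / 2) (a := a) (b := b)
  have e2 : (2 : ℝ) * ((u + v) / 2) = u + v := by ring
  rw [e2] at key
  have hsplit : b ^ (u + v) * a ^ (-(u + v)) =
      b ^ u * ((b ^ v * a ^ (-v)) * a ^ (-u)) := by
    rw [rpow_add h0b, show (-(u + v) : ℝ) = -v + -u by ring, rpow_add h0a]
    noncomm_ring
  have hle : ((‖b ^ ((u + v) / 2) * a ^ (-((u + v) / 2))‖₊ : ℝ≥0∞)) ^ 2 ≤ 1 := by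
    rw [key, hsplit, my_spectralRadius_mul_comm]
    calc spectralRadius ℂ ((b ^ v * a ^ (-v)) * a ^ (-u) * b ^ u)
        = spectralRadius ℂ ((b ^ v * a ^ (-v)) * (a ^ (-u) * b ^ u)) := by
          rw [mul_assoc]
      _ ≤ (‖(b ^ v * a ^ (-v)) * (a ^ (-u) * b ^ u)‖₊ : ℝ≥0∞) :=
          spectrum.spectralRadius_le_nnnorm _
      _ ≤ ((‖b ^ v * a ^ (-v)‖₊ * ‖a ^ (-u) * b ^ u‖₊ : ℝ≥0) : ℝ≥0∞) := by
          exact_mod_cast ENNReal.coe_le_coe.mpr (nnnorm_mul_le _ _)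
      _ ≤ 1 := by
          have h1' : ‖a ^ (-u) * b ^ u‖₊ ≤ 1 := by
            rw [← star_mul_rpow hau hbu u (-u), nnnorm_star]
            exact h1
          calc ((‖b ^ v * a ^ (-v)‖₊ * ‖a ^ (-u) * b ^ u‖₊ : ℝ≥0) : ℝ≥0∞)
              ≤ ((1 * 1 : ℝ≥0) : ℝ≥0∞) := by
                exact_mod_cast mul_le_mul' h2 h1'
            _ = 1 := by norm_num
  have hle' : ‖b ^ ((u + v) / 2) * a ^ (-((u + v) / 2))‖₊ ^ 2 ≤ 1 := by exact_mod_cast hle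
  exact pow_le_one_iff_of_nonneg (by positivity) two_ne_zero |>.mp hle'

lemma N_base (hau : IsUnit a) (hbu : IsUnit b) (hba : b ≤ a)
    (ha : 0 ≤ a := by cfc_tac) (hb : 0 ≤ b := by cfc_tac) :
    ‖b ^ ((1 : ℝ) / 2) * a ^ (-((1 : ℝ) / 2))‖₊ ≤ 1 := by
  have h1 : b ^ (1 : ℝ) ≤ a ^ (1 : ℝ) := by rw [rpow_one a, rpow_one b]; exact hba
  have h2 := (le_rpow_iff_norm hau hbu one_pos).mp h1
  exact_mod_cast h2

lemma N_dyadic (hau : IsUnit a) (hbu : IsUnit b) (hba : b ≤ a)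
    (ha : 0 ≤ a := by cfc_tac) (hb : 0 ≤ b := by cfc_tac) :
    ∀ n k : ℕ, 1 ≤ k → k ≤ 2 ^ n →
      ‖b ^ ((k : ℝ) / 2 ^ (n + 1)) * a ^ (-((k : ℝ) / 2 ^ (n + 1)))‖₊ ≤ 1 := by
  intro n
  induction n with
  | zero =>
    intro k hk1 hk2
    have hk : k = 1 := by omega
    subst hk
    have e : ((1 : ℕ) : ℝ) / 2 ^ (0 + 1) = (1 : ℝ) / 2 := by norm_num
    rw [e]
    exact N_base hau hbu hba
  | succ n ih =>
    intro k hk1 hk2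
    rcases Nat.even_or_odd k with ⟨j, hj⟩ | ⟨j, hj⟩
    · -- k = j + j
      have hj1 : 1 ≤ j := by omega
      have hj2 : j ≤ 2 ^ n := by
        have : 2 ^ (n + 1) = 2 ^ n + 2 ^ n := by ring
        omega
      have e : ((k : ℕ) : ℝ) / 2 ^ (n + 1 + 1) = ((j : ℕ) : ℝ) / 2 ^ (n + 1) := by
        subst hj; push_cast; ring
      rw [e]
      exact ih j hj1 hj2
    · rcases Nat.eq_zero_or_pos j with rfl | hj1
      · -- k = 1 : halve 1/2^(n+1)
        have hk : k = 1 := by omega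
        subst hk
        have h := N_half hau hbu (ih 1 le_rfl (Nat.one_le_two_pow))
        have e : ((1 : ℕ) : ℝ) / 2 ^ (n + 1 + 1) = (((1 : ℕ) : ℝ) / 2 ^ (n + 1)) / 2 := by
          push_cast; ring
        rw [e]
        exact h
      · -- k = 2 j + 1, j ≥ 1
        have hj2 : j + 1 ≤ 2 ^ n := by
          have : 2 ^ (n + 1) = 2 ^ n + 2 ^ n := by ring
          omega
        have h1 := ih j hj1 (by omega)
        have h2 := ih (j + 1) (by omega) hj2
        have h := N_mid hau hbu h1 h2
        have e : ((k : ℕ) : ℝ) / 2 ^ (n + 1 + 1) =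
            (((j : ℕ) : ℝ) / 2 ^ (n + 1) + (((j + 1 : ℕ)) : ℝ) / 2 ^ (n + 1)) / 2 := by
          subst hj; push_cast; ring
        rw [e]
        exact h

/-- Loewner--Heinz for dyadic exponents `k / 2 ^ n ∈ (0, 1]`. -/
lemma LH_dyadic (hau : IsUnit a) (hbu : IsUnit b) (hba : b ≤ a) (n k : ℕ)
    (hk1 : 1 ≤ k) (hk2 : k ≤ 2 ^ n)
    (ha : 0 ≤ a := by cfc_tac) (hb : 0 ≤ b := by cfc_tac) :
    b ^ ((k : ℝ) / 2 ^ n) ≤ a ^ ((k : ℝ) / 2 ^ n) := by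
  have hw : (0 : ℝ) < (k : ℝ) / 2 ^ n := by positivity
  refine (le_rpow_iff_norm hau hbu hw).mpr ?_
  have h := N_dyadic hau hbu hba ha hb n k hk1 hk2
  have e : ((k : ℝ) / 2 ^ n) / 2 = (k : ℝ) / 2 ^ (n + 1) := by push_cast; ring
  rw [e]
  exact_mod_cast h

lemma contOn_rpow (w : ℝ) (hw : 0 < w) (s : Set ℝ) :
    ContinuousOn (fun t : ℝ => t ^ w) s :=
  fun t _ => (Real.continuousAt_rpow_const t w (Or.inr hw.le)).continuousWithinAt

lemma cfc_real_rpow (X : A) {w : ℝ} (hw : 0 < w) (hX : 0 ≤ X := by cfc_tac) :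
    cfc (fun t : ℝ => t ^ w) X = X ^ w := by
  rw [rpow_def, cfc_nnreal_eq_real _ X]
  apply cfc_congr
  intro x hx
  have hx0 : 0 ≤ x := spectrum_nonneg_of_nonneg hX hx
  simp [NNReal.coe_rpow, Real.coe_toNNReal x hx0]

lemma spectrum_lower (X : A) (hXu : IsUnit X) (hX : 0 ≤ X := by cfc_tac) :
    ∃ ε > 0, ∀ x ∈ spectrum ℝ X, ε ≤ x := by
  have hsa : IsSelfAdjoint X := .of_nonneg hX
  have h := (CFC.exists_pos_algebraMap_le_iff (a := X) hsa).mpr ?_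
  · obtain ⟨ε, hε, hle⟩ := h
    refine ⟨ε, hε, ?_⟩
    exact (algebraMap_le_iff_le_spectrum (a := X) hsa).mp hle
  · intro x hx
    have h0 : x ≠ 0 := fun h => spectrum.zero_notMem ℝ hXu (h ▸ hx)
    exact lt_of_le_of_ne (spectrum_nonneg_of_nonneg hX hx) (Ne.symm h0)

lemma tendsto_cfc_rpow (X : A) (hXu : IsUnit X) {q : ℕ → ℝ} {r : ℝ}
    (hr0 : 0 < r) (hr1 : r ≤ 1) (hge : ∀ n, r ≤ q n)
    (hq : Filter.Tendsto q Filter.atTop (nhds r)) (hX : 0 ≤ X := by cfc_tac) :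
    Filter.Tendsto (fun n => cfc (fun t : ℝ => t ^ (q n)) X) Filter.atTop
      (nhds (cfc (fun t : ℝ => t ^ r) X)) := by
  obtain ⟨ε, hε, hεle⟩ := spectrum_lower X hXu
  set M := ‖X‖ with hM
  have hxM : ∀ x ∈ spectrum ℝ X, x ≤ M := fun x hx =>
    (le_abs_self x).trans (spectrum.norm_le_norm_of_mem hx)
  obtain ⟨x₀, hx₀⟩ := spectrum_nonempty ℝ X (IsSelfAdjoint.of_nonneg hX)
  have hεM : ε ≤ M := (hεle x₀ hx₀).trans (hxM x₀ hx₀)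
  set g : ℝ → ℝ := fun d => max M 1 * max (M ^ d - 1) (1 - ε ^ d) with hg
  have hg0 : ∀ d, 0 ≤ d → 0 ≤ g d := by
    intro d hd
    have h1 : (0 : ℝ) ≤ max M 1 := le_trans zero_le_one (le_max_right _ _)
    refine mul_nonneg h1 ?_
    rcases le_or_gt ε 1 with h | h
    · exact le_trans (sub_nonneg.mpr (Real.rpow_le_one hε.le h hd)) (le_max_right _ _)
    · have : (1 : ℝ) ≤ M ^ d := Real.one_le_rpow (le_trans h.le hεM) hd
      exact le_trans (sub_nonneg.mpr this) (le_max_left _ _)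
  have hbound : ∀ n, ‖cfc (fun t : ℝ => t ^ (q n)) X - cfc (fun t : ℝ => t ^ r) X‖ ≤
      g (q n - r) := by
    intro n
    have hd0 : 0 ≤ q n - r := sub_nonneg.mpr (hge n)
    rw [← cfc_sub _ _ X (contOn_rpow _ (hr0.trans_le (hge n)) _) (contOn_rpow _ hr0 _)]
    refine norm_cfc_le (hg0 _ hd0) fun x hx => ?_
    have hεx := hεle x hx
    have hxpos : 0 < x := hε.trans_le hεx
    have hxM' := hxM x hx
    set d := q n - r with hdd
    have hsplit : x ^ (q n) - x ^ r = x ^ r * (x ^ d - 1) := by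
      rw [mul_sub, mul_one, ← Real.rpow_add hxpos]
      congr 2
      ring
    rw [Real.norm_eq_abs, hsplit, abs_mul, abs_of_nonneg (Real.rpow_nonneg hxpos.le r)]
    have h1 : x ^ r ≤ max M 1 := by
      rcases le_or_gt x 1 with h | h
      · exact le_trans (Real.rpow_le_one hxpos.le h hr0.le) (le_max_right _ _)
      · calc x ^ r ≤ x ^ (1 : ℝ) := Real.rpow_le_rpow_of_exponent_le h.le hr1
          _ = x := Real.rpow_one x
          _ ≤ max M 1 := le_trans hxM' (le_max_left _ _)
    have h2 : |x ^ d - 1| ≤ max (M ^ d - 1) (1 - ε ^ d) := by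
      rcases le_or_gt 1 (x ^ d) with h | h
      · rw [abs_of_nonneg (sub_nonneg.mpr h)]
        exact le_trans (sub_le_sub_right (Real.rpow_le_rpow hxpos.le hxM' hd0) 1)
          (le_max_left _ _)
      · rw [abs_of_neg (sub_neg.mpr h), neg_sub]
        exact le_trans (sub_le_sub_left (Real.rpow_le_rpow hε.le hεx hd0) 1)
          (le_max_right _ _)
    exact mul_le_mul h1 h2 (abs_nonneg _) (le_trans zero_le_one (le_max_right _ _))
  have hgc : Filter.Tendsto (fun n => g (q n - r)) Filter.atTop (nhds 0) := by
    have hM0 : M ≠ 0 := (hε.trans_le hεM).ne'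
    have hgcont : ContinuousAt g 0 := by
      have hMc : ContinuousAt (fun d : ℝ => M ^ d) 0 := Real.continuousAt_const_rpow hM0
      have hεc : ContinuousAt (fun d : ℝ => ε ^ d) 0 := Real.continuousAt_const_rpow hε.ne'
      exact continuousAt_const.mul ((hMc.sub continuousAt_const).max
        (continuousAt_const.sub hεc))
    have hqq : Filter.Tendsto (fun n => q n - r) Filter.atTop (nhds 0) := by
      simpa using hq.sub_const r
    have := Filter.Tendsto.comp hgcont hqq
    simpa [hg, Real.rpow_zero, Function.comp_def] using this
  have := squeeze_zero_norm hbound hgc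
  exact tendsto_sub_nhds_zero_iff.mp this

/-- Loewner--Heinz for invertible elements. -/
lemma LH_unit (hau : IsUnit a) (hbu : IsUnit b) (hba : b ≤ a) {r : ℝ}
    (hr0 : 0 < r) (hr1 : r ≤ 1)
    (ha : 0 ≤ a := by cfc_tac) (hb : 0 ≤ b := by cfc_tac) :
    cfc (fun t : ℝ => t ^ r) b ≤ cfc (fun t : ℝ => t ^ r) a := by
  set k : ℕ → ℕ := fun n => ⌈r * 2 ^ n⌉₊ with hk
  set q : ℕ → ℝ := fun n => (k n : ℝ) / 2 ^ n with hq
  have h2n : ∀ n : ℕ, (0 : ℝ) < 2 ^ n := fun n => by positivity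
  have hk1 : ∀ n, 1 ≤ k n := fun n =>
    Nat.one_le_ceil_iff.mpr (by positivity)
  have hk2 : ∀ n, k n ≤ 2 ^ n := by
    intro n
    rw [hk, Nat.ceil_le]
    push_cast
    calc r * 2 ^ n ≤ 1 * 2 ^ n := by
          exact mul_le_mul_of_nonneg_right hr1 (h2n n).le
      _ = 2 ^ n := one_mul _
  have hge : ∀ n, r ≤ q n := by
    intro n
    rw [hq, le_div_iff₀ (h2n n)]
    calc r * 2 ^ n ≤ (⌈r * 2 ^ n⌉₊ : ℝ) := Nat.le_ceil _
      _ = (k n : ℝ) := rfl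
  have hub : ∀ n, q n ≤ r + (1 / 2) ^ n := by
    intro n
    rw [hq, div_le_iff₀ (h2n n)]
    have := (Nat.ceil_lt_add_one (by positivity : (0:ℝ) ≤ r * 2 ^ n)).le
    calc (k n : ℝ) ≤ r * 2 ^ n + 1 := this
      _ ≤ (r + (1 / 2) ^ n) * 2 ^ n := by
          rw [add_mul]
          gcongr
          rw [div_pow, one_pow, div_mul_cancel₀]
          exact (h2n n).ne'
  have hqt : Filter.Tendsto q Filter.atTop (nhds r) := by
    have hlow : Filter.Tendsto (fun _ : ℕ => r) Filter.atTop (nhds r) :=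
      tendsto_const_nhds
    have hhigh : Filter.Tendsto (fun n : ℕ => r + (1 / 2) ^ n) Filter.atTop (nhds r) := by
      have : Filter.Tendsto (fun n : ℕ => ((1:ℝ) / 2) ^ n) Filter.atTop (nhds 0) :=
        tendsto_pow_atTop_nhds_zero_of_lt_one (by norm_num) (by norm_num)
      simpa using hlow.add this
    exact tendsto_of_tendsto_of_tendsto_of_le_of_le hlow hhigh hge hub
  have hle : ∀ n, cfc (fun t : ℝ => t ^ (q n)) b ≤ cfc (fun t : ℝ => t ^ (q n)) a := by
    intro n
    have hqn : (0 : ℝ) < q n := lt_of_lt_of_le hr0 (hge n)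
    rw [cfc_real_rpow b hqn, cfc_real_rpow a hqn]
    exact LH_dyadic hau hbu hba n (k n) (hk1 n) (by exact_mod_cast hk2 n)
  exact le_of_tendsto_of_tendsto' (tendsto_cfc_rpow b hbu hr0 hr1 hge hqt)
    (tendsto_cfc_rpow a hau hr0 hr1 hge hqt) hle

end Nontriv

lemma contOn_shift (ε w : ℝ) (hw : 0 < w) (s : Set ℝ) :
    ContinuousOn (fun x : ℝ => (x + ε) ^ w) s := by
  intro t _
  have h := Real.continuousAt_rpow_const (t + ε) w (Or.inr hw.le)
  have h2 : ContinuousAt (fun x : ℝ => x + ε) t := by fun_prop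
  exact (ContinuousAt.comp (f := fun x : ℝ => x + ε) h h2).continuousWithinAt

lemma main (a b : A) (ha : 0 ≤ a) (hb : 0 ≤ b) (hba : b ≤ a) (hab : IsUnit (a - b))
    (r : ℝ) (hr0 : 0 < r) (hr1 : r ≤ 1) :
    cfc (fun t : ℝ => t ^ r) b ≤ cfc (fun t : ℝ => t ^ r) a ∧
      IsUnit (cfc (fun t : ℝ => t ^ r) a - cfc (fun t : ℝ => t ^ r) b) := by
  rcases subsingleton_or_nontrivial A with hS | hN
  · exact ⟨le_of_eq (Subsingleton.elim _ _), ⟨1, Subsingleton.elim _ _⟩⟩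
  have hab0 : (0 : A) ≤ a - b := sub_nonneg.mpr hba
  obtain ⟨ε, hε, hεle⟩ : ∃ ε > 0, algebraMap ℝ A ε ≤ a - b := by
    refine (CFC.exists_pos_algebraMap_le_iff (a := a - b) (.of_nonneg hab0)).mpr ?_
    intro x hx
    have h0 : x ≠ 0 := fun h => spectrum.zero_notMem ℝ hab (h ▸ hx)
    exact lt_of_le_of_ne (spectrum_nonneg_of_nonneg hab0 hx) (Ne.symm h0)
  have honele : (0 : A) ≤ 1 := by simpa using star_mul_self_nonneg (1 : A)
  have hone : (0 : A) ≤ algebraMap ℝ A ε := by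
    rw [Algebra.algebraMap_eq_smul_one]
    exact smul_nonneg hε.le honele
  set c : A := b + algebraMap ℝ A ε with hc
  have hc0 : 0 ≤ c := add_nonneg hb hone
  have hεc : algebraMap ℝ A ε ≤ c := le_add_of_nonneg_left hb
  have hεu : IsUnit (algebraMap ℝ A ε) :=
    (isUnit_iff_ne_zero.mpr hε.ne').map (algebraMap ℝ A)
  have hcu : IsUnit c := CStarAlgebra.isUnit_of_le _ hεc (hεu.isStrictlyPositive hone)
  have hca : c ≤ a := by
    have h := add_le_add_right hεle b
    rw [hc]
    calc b + algebraMap ℝ A ε ≤ b + (a - b) := h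
      _ = a := by abel
  have hau : IsUnit a := CStarAlgebra.isUnit_of_le _ hca (hcu.isStrictlyPositive hc0)
  have hid : cfc (fun x : ℝ => x + ε) b = c := by
    have h1 : cfc (fun x : ℝ => x + ε) b =
        cfc (fun x : ℝ => x) b + cfc (fun _ : ℝ => ε) b :=
      cfc_add (a := b) (fun x : ℝ => x) (fun _ : ℝ => ε)
    rw [h1, cfc_id' (R := ℝ) (a := b), cfc_const ε b]
  have hshift : cfc (fun x : ℝ => (x + ε) ^ r) b = cfc (fun t : ℝ => t ^ r) c := by
    have hcomp := cfc_comp' (fun t : ℝ => t ^ r) (fun x : ℝ => x + ε) b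
      (contOn_rpow r hr0 _) (by fun_prop)
    rw [hid] at hcomp
    exact hcomp
  have hsne : (spectrum ℝ b).Nonempty := spectrum_nonempty ℝ b (.of_nonneg hb)
  have hscomp : IsCompact (spectrum ℝ b) := spectrum.isCompact b
  have hhcont : ContinuousOn (fun x : ℝ => (x + ε) ^ r - x ^ r) (spectrum ℝ b) :=
    (contOn_shift ε r hr0 _).sub (contOn_rpow r hr0 _)
  obtain ⟨x₀, hx₀, hmin⟩ := hscomp.exists_isMinOn hsne hhcont
  set δ : ℝ := (x₀ + ε) ^ r - x₀ ^ r with hδ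
  have hx₀0 : 0 ≤ x₀ := spectrum_nonneg_of_nonneg hb hx₀
  have hδpos : 0 < δ :=
    sub_pos.mpr (Real.rpow_lt_rpow hx₀0 (lt_add_of_pos_right x₀ hε) hr0)
  have hδle : algebraMap ℝ A δ ≤ cfc (fun x : ℝ => (x + ε) ^ r - x ^ r) b :=
    (algebraMap_le_cfc_iff _ _ b hhcont).mpr fun x hx => (isMinOn_iff.mp hmin) x hx
  have hsub : cfc (fun x : ℝ => (x + ε) ^ r - x ^ r) b =
      cfc (fun x : ℝ => (x + ε) ^ r) b - cfc (fun t : ℝ => t ^ r) b :=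
    cfc_sub _ _ b (contOn_shift ε r hr0 _) (contOn_rpow r hr0 _)
  have hLH : cfc (fun t : ℝ => t ^ r) c ≤ cfc (fun t : ℝ => t ^ r) a :=
    LH_unit hau hcu hca hr0 hr1
  have h1 : cfc (fun t : ℝ => t ^ r) b ≤ cfc (fun t : ℝ => t ^ r) c := by
    rw [← hshift]
    refine cfc_mono (fun x hx => ?_) (contOn_rpow r hr0 _) (contOn_shift ε r hr0 _)
    exact Real.rpow_le_rpow (spectrum_nonneg_of_nonneg hb hx)
      (le_add_of_nonneg_right hε.le) hr0.le
  refine ⟨h1.trans hLH, ?_⟩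
  have h2 : algebraMap ℝ A δ ≤ cfc (fun t : ℝ => t ^ r) a - cfc (fun t : ℝ => t ^ r) b := by
    calc algebraMap ℝ A δ
        ≤ cfc (fun x : ℝ => (x + ε) ^ r) b - cfc (fun t : ℝ => t ^ r) b := by
          rw [← hsub]; exact hδle
      _ = cfc (fun t : ℝ => t ^ r) c - cfc (fun t : ℝ => t ^ r) b := by rw [hshift]
      _ ≤ cfc (fun t : ℝ => t ^ r) a - cfc (fun t : ℝ => t ^ r) b :=
          sub_le_sub_right hLH _
  have hδu : IsUnit (algebraMap ℝ A δ) :=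
    (isUnit_iff_ne_zero.mpr hδpos.ne').map (algebraMap ℝ A)
  have hδ0 : (0 : A) ≤ algebraMap ℝ A δ := by
    rw [Algebra.algebraMap_eq_smul_one]
    exact smul_nonneg hδpos.le honele
  exact CStarAlgebra.isUnit_of_le _ h2 (hδu.isStrictlyPositive hδ0)

end LH

/-- the function `t ↦ t^r` (`0 < r ≤ 1`) is strictly operator monotone
on `[0, ∞)`: if `A ≥ B ≥ 0` and `A - B` is invertible, then `A^r > B^r`, i.e.,
`A^r - B^r` is positive and invertible. -/
theorem stmt17 {H : Type*} [NormedAddCommGroup H] [InnerProductSpace ℂ H] [CompleteSpace H]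
    (A B : H →L[ℂ] H) (hA : 0 ≤ A) (hB : 0 ≤ B) (hBA : B ≤ A) (hAB : IsUnit (A - B))
    (r : ℝ) (hr0 : 0 < r) (hr1 : r ≤ 1) :
    cfc (fun t : ℝ => t ^ r) B ≤ cfc (fun t : ℝ => t ^ r) A ∧
    IsUnit (cfc (fun t : ℝ => t ^ r) A - cfc (fun t : ℝ => t ^ r) B) :=
  LH.main A B hA hB hBA hAB r hr0 hr1
end
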